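/- arXiv:1808.10593 — 5 statements merged into one kernel-verified Lean document; each statement's English description precedes it below -/
import Mathlib

section
/- Consider the multitype Galton–Watson process arising from an m-ary tree indexed Markov process with reversible transition matrix P (so the mean matrix is M = mP). For any eigenvector f_j of P with eigenvalue λ_j, the variance of ⟨Z_t, f_j⟩ satisfies: Var(⟨Z_t, f_j⟩) = O((mλ_j)^{2t}) if mλ_j² > 1; O(t(mλ_j)^{2t}) if mλ_j² = 1; and O(m^t) if mλ_j² < 1. -/
/-!
Write `X_t = ⟨Z_t, f⟩` and `q_t = 𝔼 Z_t`. Because `(mP) f = (mλ) f`, conditioning on `F t` gives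
`𝔼 X_{t+1} = mλ 𝔼 X_t` and `Var X_{t+1} = (mλ)² Var X_t + m ∑ᵢ q_t(i) σᵢ`, where
`σᵢ = ∑ⱼ Pᵢⱼ fⱼ² - (∑ⱼ Pᵢⱼ fⱼ)² ≥ 0` is the variance of `f` under the `i`-th row of `P`. As `q_t` is
nonnegative with total mass `m^t`, the source term is at most `S m^{t+1}` with `S = ∑ᵢ σᵢ`, so
`Var X_t ≤ S m^t ∑_{s<t} (mλ²)^s`; the three regimes are the three behaviours of this geometric sum.
-/

open MeasureTheory ProbabilityTheory Matrix Finset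
open scoped ENNReal

section QuadraticForms

variable {ι : Type*} [Fintype ι]

/-- Covariance matrix of the multinomial law with `m` trials and cell probabilities `p`: the
type counts among the children of an individual of type `i` are multinomial with `p = P i`. -/
def multinomialCov [DecidableEq ι] (m : ℝ) (p : ι → ℝ) : Matrix ι ι ℝ :=
  m • (diagonal p - vecMulVec p p)

lemma dotProduct_multinomialCov_mulVec [DecidableEq ι] (m : ℝ) (p f : ι → ℝ) :
    f ⬝ᵥ (multinomialCov m p *ᵥ f) = m * (p ⬝ᵥ (f * f) - (p ⬝ᵥ f) ^ 2) := by
  have hdiag : f ⬝ᵥ (diagonal p *ᵥ f) = p ⬝ᵥ (f * f) :=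
    sum_congr rfl fun i _ => by simp only [mulVec_diagonal, Pi.mul_apply]; ring
  rw [multinomialCov, smul_mulVec, sub_mulVec, dotProduct_smul, dotProduct_sub, hdiag,
    vecMulVec_mulVec, dotProduct_smul, dotProduct_comm f p, smul_eq_mul]
  simp [sq]

lemma sq_dotProduct_le_dotProduct_mul_self {p : ι → ℝ} (hp0 : ∀ i, 0 ≤ p i)
    (hp1 : ∑ i, p i = 1) (f : ι → ℝ) : (p ⬝ᵥ f) ^ 2 ≤ p ⬝ᵥ (f * f) := by
  simpa [dotProduct, sq] using
    (even_two.convexOn_pow (𝕜 := ℝ)).map_sum_le (fun i _ => hp0 i) hp1 (p := f)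
      fun i _ => Set.mem_univ _

lemma sum_sum_dotProduct_mul_mul {κ : Type*} [Fintype κ] (q : ι → ℝ) (V : ι → Matrix κ κ ℝ)
    (f : κ → ℝ) :
    ∑ j, ∑ k, (q ⬝ᵥ fun i => V i j k) * (f j * f k) = q ⬝ᵥ fun i => f ⬝ᵥ (V i *ᵥ f) := by
  simp only [dotProduct, mulVec, sum_mul, mul_sum]
  rw [sum_comm (s := univ) (t := univ) (γ := ι)]
  refine sum_congr rfl fun j _ => ?_
  rw [sum_comm]
  exact sum_congr rfl fun k _ => sum_congr rfl fun i _ => by ring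

lemma dotProduct_le_dotProduct_one_mul_sum {q Q : ι → ℝ} (hq : ∀ i, 0 ≤ q i)
    (hQ : ∀ i, 0 ≤ Q i) : q ⬝ᵥ Q ≤ (q ⬝ᵥ 1) * ∑ i, Q i := by
  rw [dotProduct, dotProduct, sum_mul]
  exact sum_le_sum fun i _ => by
    simpa using mul_le_mul_of_nonneg_left (single_le_sum (fun j _ => hQ j) (mem_univ i)) (hq i)

end QuadraticForms

section Moments

variable {Ω ι : Type*} [Fintype ι] {m0 : MeasurableSpace Ω} {μ : Measure Ω}

lemma memLp_dotProduct {p : ℝ≥0∞} {W : Ω → ι → ℝ} (hW : ∀ i, MemLp (fun ω => W ω i) p μ)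
    (c : ι → ℝ) : MemLp (fun ω => W ω ⬝ᵥ c) p μ :=
  memLp_finsetSum _ fun i _ => (hW i).mul_const (c i)

lemma integral_dotProduct {W : Ω → ι → ℝ} (hW : ∀ i, Integrable (fun ω => W ω i) μ)
    (c : ι → ℝ) : ∫ ω, W ω ⬝ᵥ c ∂μ = (fun i => ∫ ω, W ω i ∂μ) ⬝ᵥ c := by
  simp only [dotProduct]
  rw [integral_finsetSum _ fun i _ => (hW i).mul_const (c i)]
  simp only [integral_mul_const]

lemma integral_dotProduct_sq {W : Ω → ι → ℝ} (hW : ∀ i, MemLp (fun ω => W ω i) 2 μ)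
    (f : ι → ℝ) :
    ∫ ω, (W ω ⬝ᵥ f) ^ 2 ∂μ = ∑ j, ∑ k, (∫ ω, W ω j * W ω k ∂μ) * (f j * f k) := by
  have hint : ∀ j k, Integrable (fun ω => W ω j * W ω k * (f j * f k)) μ :=
    fun j k => ((hW j).integrable_mul (hW k)).mul_const _
  calc ∫ ω, (W ω ⬝ᵥ f) ^ 2 ∂μ = ∫ ω, ∑ j, ∑ k, W ω j * W ω k * (f j * f k) ∂μ := by
        congr 1 with ω
        rw [sq, dotProduct, sum_mul_sum]
        exact sum_congr rfl fun j _ => sum_congr rfl fun k _ => by ring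
    _ = ∑ j, ∑ k, (∫ ω, W ω j * W ω k ∂μ) * (f j * f k) := by
        rw [integral_finsetSum _ fun j _ => integrable_finsetSum _ fun k _ => hint j k]
        refine sum_congr rfl fun j _ => ?_
        rw [integral_finsetSum _ fun k _ => hint j k]
        simp only [integral_mul_const]

end Moments

section MultitypeGaltonWatson

variable {Ω ι : Type*} [Fintype ι] {m0 : MeasurableSpace Ω} {μ : Measure Ω} [IsFiniteMeasure μ]
  {Z : ℕ → Ω → ι → ℝ} {F : Filtration ℕ m0} {M : Matrix ι ι ℝ} {V : ι → Matrix ι ι ℝ}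

lemma integral_succ_eq_vecMul (hZ : ∀ t i, Integrable (fun ω => Z t ω i) μ)
    (hmean : ∀ t j, μ[fun ω => Z (t + 1) ω j | F t] =ᵐ[μ] fun ω => ∑ i, Z t ω i * M i j)
    (t : ℕ) : (fun j => ∫ ω, Z (t + 1) ω j ∂μ) = (fun i => ∫ ω, Z t ω i ∂μ) ᵥ* M := by
  funext j
  rw [← integral_condExp (F.le t), integral_congr_ae (hmean t j)]
  exact integral_dotProduct (hZ t) _

lemma integral_mul_succ (hZ : ∀ t i, MemLp (fun ω => Z t ω i) 2 μ)
    (hsecond : ∀ t j k, μ[fun ω => Z (t + 1) ω j * Z (t + 1) ω k | F t] =ᵐ[μ]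
      fun ω => (∑ i, Z t ω i * M i j) * (∑ i, Z t ω i * M i k) + ∑ i, Z t ω i * V i j k)
    (t : ℕ) (j k : ι) :
    ∫ ω, Z (t + 1) ω j * Z (t + 1) ω k ∂μ =
      ∫ ω, (Z t ω ᵥ* M) j * (Z t ω ᵥ* M) k ∂μ +
        (fun i => ∫ ω, Z t ω i ∂μ) ⬝ᵥ fun i => V i j k := by
  have hZ1 : ∀ i, Integrable (fun ω => Z t ω i) μ := fun i => (hZ t i).integrable one_le_two
  have hA : ∀ j, MemLp (fun ω => (Z t ω ᵥ* M) j) 2 μ := fun j => memLp_dotProduct (hZ t) _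
  rw [← integral_condExp (F.le t), integral_congr_ae (hsecond t j k)]
  exact (integral_add ((hA j).integrable_mul (hA k))
    ((memLp_dotProduct (hZ t) _).integrable one_le_two)).trans
      (congrArg _ (integral_dotProduct hZ1 _))

variable {f : ι → ℝ} {ρ : ℝ}

lemma integral_dotProduct_succ (hZ : ∀ t i, Integrable (fun ω => Z t ω i) μ)
    (hmean : ∀ t j, μ[fun ω => Z (t + 1) ω j | F t] =ᵐ[μ] fun ω => ∑ i, Z t ω i * M i j)
    (hf : M *ᵥ f = ρ • f) (t : ℕ) :
    ∫ ω, Z (t + 1) ω ⬝ᵥ f ∂μ = ρ * ∫ ω, Z t ω ⬝ᵥ f ∂μ := by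
  rw [integral_dotProduct (hZ (t + 1)), integral_succ_eq_vecMul hZ hmean, ← dotProduct_mulVec,
    hf, dotProduct_smul, integral_dotProduct (hZ t), smul_eq_mul]

lemma integral_dotProduct_sq_succ (hZ : ∀ t i, MemLp (fun ω => Z t ω i) 2 μ)
    (hsecond : ∀ t j k, μ[fun ω => Z (t + 1) ω j * Z (t + 1) ω k | F t] =ᵐ[μ]
      fun ω => (∑ i, Z t ω i * M i j) * (∑ i, Z t ω i * M i k) + ∑ i, Z t ω i * V i j k)
    (hf : M *ᵥ f = ρ • f) (t : ℕ) :
    ∫ ω, (Z (t + 1) ω ⬝ᵥ f) ^ 2 ∂μ = ρ ^ 2 * ∫ ω, (Z t ω ⬝ᵥ f) ^ 2 ∂μ +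
      (fun i => ∫ ω, Z t ω i ∂μ) ⬝ᵥ fun i => f ⬝ᵥ (V i *ᵥ f) := by
  have hA : ∀ ω, (Z t ω ᵥ* M) ⬝ᵥ f = ρ * (Z t ω ⬝ᵥ f) := fun ω => by
    rw [← dotProduct_mulVec, hf, dotProduct_smul, smul_eq_mul]
  have hAL2 : ∀ j, MemLp (fun ω => (Z t ω ᵥ* M) j) 2 μ := fun j => memLp_dotProduct (hZ t) _
  calc ∫ ω, (Z (t + 1) ω ⬝ᵥ f) ^ 2 ∂μ
      = ∑ j, ∑ k, (∫ ω, Z (t + 1) ω j * Z (t + 1) ω k ∂μ) * (f j * f k) :=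
        integral_dotProduct_sq (hZ (t + 1)) f
    _ = ∑ j, ∑ k, (∫ ω, (Z t ω ᵥ* M) j * (Z t ω ᵥ* M) k ∂μ) * (f j * f k) +
          ∑ j, ∑ k, ((fun i => ∫ ω, Z t ω i ∂μ) ⬝ᵥ fun i => V i j k) * (f j * f k) := by
        simp only [integral_mul_succ hZ hsecond, add_mul, sum_add_distrib]
    _ = ∫ ω, ((Z t ω ᵥ* M) ⬝ᵥ f) ^ 2 ∂μ +
          (fun i => ∫ ω, Z t ω i ∂μ) ⬝ᵥ fun i => f ⬝ᵥ (V i *ᵥ f) := by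
        rw [integral_dotProduct_sq hAL2 f, sum_sum_dotProduct_mul_mul]
    _ = _ := by simp only [hA, mul_pow, integral_const_mul]

lemma variance_dotProduct_succ [IsProbabilityMeasure μ]
    (hZ : ∀ t i, MemLp (fun ω => Z t ω i) 2 μ)
    (hmean : ∀ t j, μ[fun ω => Z (t + 1) ω j | F t] =ᵐ[μ] fun ω => ∑ i, Z t ω i * M i j)
    (hsecond : ∀ t j k, μ[fun ω => Z (t + 1) ω j * Z (t + 1) ω k | F t] =ᵐ[μ]
      fun ω => (∑ i, Z t ω i * M i j) * (∑ i, Z t ω i * M i k) + ∑ i, Z t ω i * V i j k)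
    (hf : M *ᵥ f = ρ • f) (t : ℕ) :
    Var[fun ω => Z (t + 1) ω ⬝ᵥ f; μ] = ρ ^ 2 * Var[fun ω => Z t ω ⬝ᵥ f; μ] +
      (fun i => ∫ ω, Z t ω i ∂μ) ⬝ᵥ fun i => f ⬝ᵥ (V i *ᵥ f) := by
  have hZ1 : ∀ t i, Integrable (fun ω => Z t ω i) μ :=
    fun t i => (hZ t i).integrable one_le_two
  rw [variance_eq_sub (memLp_dotProduct (hZ _) f), variance_eq_sub (memLp_dotProduct (hZ _) f)]
  simp only [Pi.pow_apply, integral_dotProduct_sq_succ hZ hsecond hf,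
    integral_dotProduct_succ hZ1 hmean hf]
  ring

end MultitypeGaltonWatson

section RowStochastic

variable {ι : Type*} [Fintype ι] [DecidableEq ι] {P : Matrix ι ι ℝ} {m : ℝ} {q : ℕ → ι → ℝ}

lemma nonneg_of_eq_vecMul_smul (hP : P ∈ rowStochastic ℝ ι) (hm : 0 ≤ m)
    (hq : ∀ t, q (t + 1) = q t ᵥ* (m • P)) (hq0 : ∀ i, 0 ≤ q 0 i) (t : ℕ) (i : ι) :
    0 ≤ q t i := by
  induction t generalizing i with
  | zero => exact hq0 i
  | succ t ih =>
    rw [hq, vecMul_smul]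
    exact mul_nonneg hm (nonneg_vecMul_of_mem_rowStochastic hP ih i)

lemma dotProduct_one_of_eq_vecMul_smul (hP : P ∈ rowStochastic ℝ ι)
    (hq : ∀ t, q (t + 1) = q t ᵥ* (m • P)) (t : ℕ) : q t ⬝ᵥ 1 = m ^ t * (q 0 ⬝ᵥ 1) := by
  induction t with
  | zero => simp
  | succ t ih =>
    rw [hq, vecMul_smul, smul_dotProduct, ← dotProduct_mulVec,
      one_vecMul_of_mem_rowStochastic hP, ih, smul_eq_mul, pow_succ]
    ring

end RowStochastic

section GeometricGrowth

variable {v : ℕ → ℝ} {a x S : ℝ}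

lemma le_mul_pow_mul_geom_sum (hax : 0 ≤ a * x) (hv0 : v 0 ≤ 0)
    (hv : ∀ t, v (t + 1) ≤ a * x * v t + S * a ^ (t + 1)) (t : ℕ) :
    v t ≤ S * (a ^ t * ∑ s ∈ range t, x ^ s) := by
  induction t with
  | zero => simpa using hv0
  | succ t ih =>
    calc v (t + 1) ≤ a * x * (S * (a ^ t * ∑ s ∈ range t, x ^ s)) + S * a ^ (t + 1) :=
          (hv t).trans (by gcongr)
      _ = S * (a ^ (t + 1) * ∑ s ∈ range (t + 1), x ^ s) := by rw [geom_sum_succ]; ring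

lemma exists_pos_le_mul_of_le_mul {g : ℕ → ℝ} {K : ℝ} (hg : ∀ t, 0 ≤ g t)
    (hv : ∀ t, v t ≤ K * g t) : ∃ C, 0 < C ∧ ∀ t, v t ≤ C * g t :=
  ⟨max K 1, by positivity, fun t =>
    (hv t).trans (mul_le_mul_of_nonneg_right (le_max_left K 1) (hg t))⟩

lemma exists_le_mul_pow_mul_pow_of_one_lt (hS : 0 ≤ S) (ha : 0 ≤ a) (hx : 1 < x)
    (hv : ∀ t, v t ≤ S * (a ^ t * ∑ s ∈ range t, x ^ s)) :
    ∃ C, 0 < C ∧ ∀ t, v t ≤ C * (a ^ t * x ^ t) := by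
  have hx0 : 0 ≤ x := zero_le_one.trans hx.le
  refine exists_pos_le_mul_of_le_mul (K := S / (x - 1)) (fun t => by positivity) fun t => ?_
  have hsum : ∑ s ∈ range t, x ^ s ≤ x ^ t / (x - 1) := by
    rw [geom_sum_eq hx.ne']
    gcongr
    linarith
  calc v t ≤ S * (a ^ t * (x ^ t / (x - 1))) := (hv t).trans (by gcongr)
    _ = S / (x - 1) * (a ^ t * x ^ t) := by ring

lemma exists_le_mul_mul_pow_of_eq_one (ha : 0 ≤ a) (hx : x = 1)
    (hv : ∀ t, v t ≤ S * (a ^ t * ∑ s ∈ range t, x ^ s)) :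
    ∃ C, 0 < C ∧ ∀ t, v t ≤ C * t * a ^ t := by
  obtain ⟨C, hC, hCv⟩ := exists_pos_le_mul_of_le_mul (K := S) (g := fun t => t * a ^ t)
    (fun t => by positivity) fun t => by simpa [hx, mul_comm] using hv t
  exact ⟨C, hC, fun t => by simpa only [mul_assoc] using hCv t⟩

lemma exists_le_mul_pow_of_lt_one (hS : 0 ≤ S) (ha : 0 ≤ a) (hx0 : 0 ≤ x) (hx : x < 1)
    (hv : ∀ t, v t ≤ S * (a ^ t * ∑ s ∈ range t, x ^ s)) :
    ∃ C, 0 < C ∧ ∀ t, v t ≤ C * a ^ t := by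
  refine exists_pos_le_mul_of_le_mul (K := S / (1 - x)) (fun t => by positivity) fun t => ?_
  have hsum : ∑ s ∈ range t, x ^ s ≤ 1 / (1 - x) := by
    have h := geom_sum_Ico_le_of_lt_one (m := 0) (n := t) hx0 hx
    rwa [pow_zero, ← range_eq_Ico] at h
  calc v t ≤ S * (a ^ t * (1 / (1 - x))) := (hv t).trans (by gcongr)
    _ = S / (1 - x) * a ^ t := by ring

end GeometricGrowth

theorem variance_dotProduct_le_geom_sum {Ω ι : Type*} [Fintype ι] [DecidableEq ι]
    {m0 : MeasurableSpace Ω} {μ : Measure Ω} [IsProbabilityMeasure μ] {m : ℝ} (hm : 0 ≤ m)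
    {P : Matrix ι ι ℝ} (hP : P ∈ rowStochastic ℝ ι) {Z : ℕ → Ω → ι → ℝ} {F : Filtration ℕ m0}
    (hZ : ∀ t i, MemLp (fun ω => Z t ω i) 2 μ) {z : ι → ℝ} (hz : ∀ i, 0 ≤ z i)
    (hz1 : z ⬝ᵥ 1 = 1) (hZ0 : ∀ ω, Z 0 ω = z)
    (hmean : ∀ t j, μ[fun ω => Z (t + 1) ω j | F t] =ᵐ[μ]
      fun ω => ∑ i, Z t ω i * (m • P) i j)
    (hsecond : ∀ t j k, μ[fun ω => Z (t + 1) ω j * Z (t + 1) ω k | F t] =ᵐ[μ]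
      fun ω => (∑ i, Z t ω i * (m • P) i j) * (∑ i, Z t ω i * (m • P) i k) +
        ∑ i, Z t ω i * multinomialCov m (P i) j k)
    {f : ι → ℝ} {lam : ℝ} (hf : P *ᵥ f = lam • f) :
    ∃ S, 0 ≤ S ∧ ∀ t,
      Var[fun ω => Z t ω ⬝ᵥ f; μ] ≤ S * (m ^ t * ∑ s ∈ range t, (m * lam ^ 2) ^ s) := by
  set q : ℕ → ι → ℝ := fun t i => ∫ ω, Z t ω i ∂μ
  set σ : ι → ℝ := fun i => P i ⬝ᵥ (f * f) - (P i ⬝ᵥ f) ^ 2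
  have hq : ∀ t, q (t + 1) = q t ᵥ* (m • P) :=
    integral_succ_eq_vecMul (fun t i => (hZ t i).integrable one_le_two) hmean
  have hq0 : q 0 = z := funext fun i => by simp [q, hZ0]
  have hσ : ∀ i, 0 ≤ σ i := fun i => sub_nonneg.2 <|
    sq_dotProduct_le_dotProduct_mul_self (fun j => hP.1 i j) (sum_row_of_mem_rowStochastic hP i) f
  have hMf : (m • P) *ᵥ f = (m * lam) • f := by rw [smul_mulVec, hf, smul_smul]
  refine ⟨∑ i, σ i, sum_nonneg fun i _ => hσ i,
    le_mul_pow_mul_geom_sum (by positivity) (by simp [hZ0, variance, evariance]) fun t => ?_⟩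
  have hw : q t ⬝ᵥ (fun i => m * σ i) ≤ (∑ i, σ i) * m ^ (t + 1) := by
    refine (dotProduct_le_dotProduct_one_mul_sum
      (nonneg_of_eq_vecMul_smul hP hm hq (hq0 ▸ hz) t) fun i => mul_nonneg hm (hσ i)).trans_eq ?_
    rw [dotProduct_one_of_eq_vecMul_smul hP hq, hq0, hz1, ← mul_sum]
    ring
  calc Var[fun ω => Z (t + 1) ω ⬝ᵥ f; μ]
      = (m * lam) ^ 2 * Var[fun ω => Z t ω ⬝ᵥ f; μ] + q t ⬝ᵥ fun i => m * σ i := by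
        simp only [variance_dotProduct_succ hZ hmean hsecond hMf, dotProduct_multinomialCov_mulVec]
        rfl
    _ ≤ m * (m * lam ^ 2) * Var[fun ω => Z t ω ⬝ᵥ f; μ] + (∑ i, σ i) * m ^ (t + 1) := by
        rw [show (m * lam) ^ 2 = m * (m * lam ^ 2) by ring]
        gcongr

theorem gw_tree_variance_trichotomy_general
    {Ω : Type*} {m0 : MeasurableSpace Ω} (μ : Measure Ω) [IsProbabilityMeasure μ]
    (N : ℕ) (m : ℕ)
    (P : Matrix (Fin N) (Fin N) ℝ)
    (hP_nonneg : ∀ i j, 0 ≤ P i j) (hP_rowsum : ∀ i, ∑ j, P i j = 1)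
    (Z : ℕ → Ω → Fin N → ℝ)
    (F : Filtration ℕ m0)
    (hL2 : ∀ t j, MemLp (fun ω => Z t ω j) 2 μ)
    (i0 : Fin N) (hZ0 : ∀ ω, Z 0 ω = fun j => if j = i0 then (1 : ℝ) else 0)
    (hmean : ∀ t j,
      μ[(fun ω => Z (t + 1) ω j) | F t] =ᵐ[μ]
        fun ω => ∑ i, Z t ω i * ((m : ℝ) * P i j))
    (hsecond : ∀ t j k,
      μ[(fun ω => Z (t + 1) ω j * Z (t + 1) ω k) | F t] =ᵐ[μ]
        fun ω => (∑ i, Z t ω i * ((m : ℝ) * P i j)) * (∑ i, Z t ω i * ((m : ℝ) * P i k))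
          + ∑ i, Z t ω i *
              ((m : ℝ) * ((if j = k then P i j else 0) - P i j * P i k)))
    (f : Fin N → ℝ) (lam : ℝ) (heig : P.mulVec f = lam • f) :
    ((m : ℝ) * lam ^ 2 > 1 →
      ∃ C : ℝ, 0 < C ∧ ∀ t : ℕ,
        variance (fun ω => ∑ j, Z t ω j * f j) μ ≤ C * ((m : ℝ) * lam) ^ (2 * t)) ∧
    ((m : ℝ) * lam ^ 2 = 1 →
      ∃ C : ℝ, 0 < C ∧ ∀ t : ℕ,
        variance (fun ω => ∑ j, Z t ω j * f j) μ ≤ C * t * ((m : ℝ) * lam) ^ (2 * t)) ∧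
    ((m : ℝ) * lam ^ 2 < 1 →
      ∃ C : ℝ, 0 < C ∧ ∀ t : ℕ,
        variance (fun ω => ∑ j, Z t ω j * f j) μ ≤ C * (m : ℝ) ^ t) := by
  have hm : (0 : ℝ) ≤ m := m.cast_nonneg
  obtain ⟨S, hS, hvar⟩ := variance_dotProduct_le_geom_sum hm
    (mem_rowStochastic_iff_sum.2 ⟨hP_nonneg, hP_rowsum⟩) hL2
    (fun j => by split_ifs <;> norm_num) (by simp [dotProduct]) hZ0 hmean hsecond heig
  have hpow : ∀ t : ℕ, ((m : ℝ) * lam) ^ (2 * t) = (m : ℝ) ^ t * ((m : ℝ) * lam ^ 2) ^ t :=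
    fun t => by rw [pow_mul, ← mul_pow]; ring
  refine ⟨fun h => ?_, fun h => ?_, fun h => ?_⟩
  · simp only [hpow]
    exact exists_le_mul_pow_mul_pow_of_one_lt hS hm h hvar
  · simp only [hpow, h, one_pow, mul_one]
    exact exists_le_mul_mul_pow_of_eq_one hm h hvar
  · exact exists_le_mul_pow_of_lt_one hS hm (by positivity) h hvar

/-- For the multitype Galton–Watson process arising from the m-tree
indexed Markov process with reversible transition matrix P (mean matrix M = mP,
offspring covariances V_k = m(diag(P_{k·}) − P_{k·}P_{k·}ᵀ)), and any
eigenvector f of P with eigenvalue λ, the variance of ⟨Z_t, f⟩ is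
O((mλ)^{2t}) if mλ² > 1, O(t(mλ)^{2t}) if mλ² = 1, and O(m^t) if mλ² < 1. -/
theorem gw_tree_variance_trichotomy
    {Ω : Type*} {m0 : MeasurableSpace Ω} (μ : Measure Ω) [IsProbabilityMeasure μ]
    (N : ℕ) (m : ℕ) (hm : 1 ≤ m)
    (P : Matrix (Fin N) (Fin N) ℝ)
    (hP_nonneg : ∀ i j, 0 ≤ P i j) (hP_rowsum : ∀ i, ∑ j, P i j = 1)
    (π : Fin N → ℝ) (hπ_pos : ∀ i, 0 < π i) (hπ_sum : ∑ i, π i = 1)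
    (hrev : ∀ i j, π i * P i j = π j * P j i)
    (Z : ℕ → Ω → Fin N → ℝ)
    (F : Filtration ℕ m0)
    (hadapted : ∀ t j, Measurable[F t] (fun ω => Z t ω j))
    (hL2 : ∀ t j, MemLp (fun ω => Z t ω j) 2 μ)
    (i0 : Fin N) (hZ0 : ∀ ω, Z 0 ω = fun j => if j = i0 then (1 : ℝ) else 0)
    (hmean : ∀ t j,
      μ[(fun ω => Z (t + 1) ω j) | F t] =ᵐ[μ]
        fun ω => ∑ i, Z t ω i * ((m : ℝ) * P i j))
    (hsecond : ∀ t j k,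
      μ[(fun ω => Z (t + 1) ω j * Z (t + 1) ω k) | F t] =ᵐ[μ]
        fun ω => (∑ i, Z t ω i * ((m : ℝ) * P i j)) * (∑ i, Z t ω i * ((m : ℝ) * P i k))
          + ∑ i, Z t ω i *
              ((m : ℝ) * ((if j = k then P i j else 0) - P i j * P i k)))
    (f : Fin N → ℝ) (lam : ℝ) (heig : P.mulVec f = lam • f) :
    ((m : ℝ) * lam ^ 2 > 1 →
      ∃ C : ℝ, 0 < C ∧ ∀ t : ℕ,
        variance (fun ω => ∑ j, Z t ω j * f j) μ ≤ C * ((m : ℝ) * lam) ^ (2 * t)) ∧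
    ((m : ℝ) * lam ^ 2 = 1 →
      ∃ C : ℝ, 0 < C ∧ ∀ t : ℕ,
        variance (fun ω => ∑ j, Z t ω j * f j) μ ≤ C * t * ((m : ℝ) * lam) ^ (2 * t)) ∧
    ((m : ℝ) * lam ^ 2 < 1 →
      ∃ C : ℝ, 0 < C ∧ ∀ t : ℕ,
        variance (fun ω => ∑ j, Z t ω j * f j) μ ≤ C * (m : ℝ) ^ t) :=
  gw_tree_variance_trichotomy_general μ N m P hP_nonneg hP_rowsum Z F hL2 i0 hZ0 hmean hsecond f lam
    heig
end

section
/- Under the m-tree Markov model with M = mP and m > λ_2^{-2}, for every j ≥ 3 the scaled martingale (λ_2^{-1}λ_j)^t Y_{t,j}, where Y_{t,j} = (mλ_j)^{-t}⟨Z_t, f_j⟩, converges to 0 almost surely and in L². -/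
open MeasureTheory BigOperators Matrix Filter
open Finset Topology
open scoped ENNReal NNReal

/-!
Fix an eigenvector `P f = λ f` and put `S_t = ⟨Z_t, f⟩`. The conditional moments of the
offspring give the exact recursion `E S_{t+1}² = (mλ)² E S_t² + m ⟨E Z_t, Var_P f⟩`, where
`Var_P f` is the vector of variances of `f` under the rows of `P`, and `E Z_t` has `ℓ¹`-mass at
most `m^t` times that of `E Z_0`. Hence `E S_t² = O(t q^t)` with `q = max ((mλ)², m)`. The gap
`|λ| < λ₂` and `mλ₂² > 1` both say `q < (mλ₂)²`, so the scaled variables `X_t = (mλ₂)^{-t} S_t`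
have second moments `O(t r^t)` with `r < 1`. Summable second moments give convergence to `0` in
`L²`, and almost surely because `∑ X_t²` then has finite expectation.
-/

section Convergence

variable {Ω : Type*} {m0 : MeasurableSpace Ω} {μ : Measure Ω}

theorem ae_tendsto_zero_and_tendsto_eLpNorm_of_tsum_lintegral_ne_top {E : Type*}
    [NormedAddCommGroup E] {p : ℝ≥0} (hp : p ≠ 0) {X : ℕ → Ω → E}
    (hX : ∀ t, AEMeasurable (fun ω => ‖X t ω‖ₑ) μ)
    (h : ∑' t, ∫⁻ ω, ‖X t ω‖ₑ ^ (p : ℝ) ∂μ ≠ ∞) :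
    (∀ᵐ ω ∂μ, Tendsto (fun t => X t ω) atTop (𝓝 0)) ∧
      Tendsto (fun t => eLpNorm (X t) p μ) atTop (𝓝 0) := by
  have hp' : (0 : ℝ) < p := by positivity
  have root : ∀ {u : ℕ → ℝ≥0∞}, Tendsto u atTop (𝓝 0) →
      Tendsto (fun t => u t ^ (p : ℝ)⁻¹) atTop (𝓝 0) := fun hu => by
    simpa [Function.comp_def, ENNReal.zero_rpow_of_pos (inv_pos.2 hp')] using
      ((ENNReal.continuous_rpow_const (y := (p : ℝ)⁻¹)).tendsto 0).comp hu
  have hmeas : ∀ t, AEMeasurable (fun ω => ‖X t ω‖ₑ ^ (p : ℝ)) μ :=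
    fun t => (hX t).pow_const _
  constructor
  · have hfin : ∀ᵐ ω ∂μ, ∑' t, ‖X t ω‖ₑ ^ (p : ℝ) ≠ ∞ := by
      refine (ae_lt_top' (AEMeasurable.tsum hmeas) ?_).mono fun ω hω => hω.ne
      rwa [lintegral_tsum hmeas]
    filter_upwards [hfin] with ω hω
    refine tendsto_zero_iff_enorm_tendsto_zero.2 ?_
    simpa [ENNReal.rpow_rpow_inv hp'.ne'] using
      root (ENNReal.tendsto_atTop_zero_of_tsum_ne_top hω)
  · simpa [eLpNorm_nnreal_eq_lintegral hp, one_div] using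
      root (ENNReal.tendsto_atTop_zero_of_tsum_ne_top h)

theorem ae_tendsto_zero_and_tendsto_eLpNorm_of_summable_integral_sq {X : ℕ → Ω → ℝ}
    (hX : ∀ t, MemLp (X t) 2 μ) (h : Summable fun t => ∫ ω, X t ω ^ 2 ∂μ) :
    (∀ᵐ ω ∂μ, Tendsto (fun t => X t ω) atTop (𝓝 0)) ∧
      Tendsto (fun t => eLpNorm (X t) 2 μ) atTop (𝓝 0) := by
  have hlintegral : ∀ t, ∫⁻ ω, ‖X t ω‖ₑ ^ ((2 : ℝ≥0) : ℝ) ∂μ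
      = ENNReal.ofReal (∫ ω, X t ω ^ 2 ∂μ) := by
    intro t
    rw [ofReal_integral_eq_lintegral_ofReal (hX t).integrable_sq
      (ae_of_all _ fun ω => sq_nonneg _)]
    congr 1 with ω
    rw [Real.enorm_eq_ofReal_abs, NNReal.coe_ofNat, ENNReal.rpow_two,
      ← ENNReal.ofReal_pow (abs_nonneg _), sq_abs]
  have hfin : ∑' t, ∫⁻ ω, ‖X t ω‖ₑ ^ ((2 : ℝ≥0) : ℝ) ∂μ ≠ ∞ := by
    simp_rw [hlintegral]
    rw [← ENNReal.ofReal_tsum_of_nonneg (fun t => integral_nonneg fun ω => sq_nonneg _) h]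
    exact ENNReal.ofReal_ne_top
  simpa using ae_tendsto_zero_and_tendsto_eLpNorm_of_tsum_lintegral_ne_top two_ne_zero
    (fun t => (hX t).aestronglyMeasurable.enorm) hfin

end Convergence

theorem le_pow_mul_of_le_mul_add_pow {u : ℕ → ℝ} {q K : ℝ} (hq : 0 ≤ q)
    (hu : ∀ t, u (t + 1) ≤ q * u t + K * q ^ (t + 1)) (t : ℕ) :
    u t ≤ q ^ t * (u 0 + t * K) := by
  induction t with
  | zero => simp
  | succ t ih =>
    calc u (t + 1) ≤ q * u t + K * q ^ (t + 1) := hu t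
      _ ≤ q * (q ^ t * (u 0 + t * K)) + K * q ^ (t + 1) := by gcongr
      _ = q ^ (t + 1) * (u 0 + (t + 1 : ℕ) * K) := by push_cast; ring

/-- Equality holds unless `b = 0 < t`, where `0⁻¹ = 0` makes the left side vanish. -/
theorem sq_inv_mul_pow_mul_zpow_neg_le {K : Type*} [Field K] [LinearOrder K]
    [IsStrictOrderedRing K] (a b c : K) (t : ℕ) :
    ((a⁻¹ * b) ^ t * (c * b) ^ (-(t : ℤ))) ^ 2 ≤ (((c * a) ^ 2) ^ t)⁻¹ := by
  rcases eq_or_ne b 0 with rfl | hb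
  · rcases Nat.eq_zero_or_pos t with rfl | ht
    · simp
    · simp [zero_pow ht.ne']
      positivity
  · have hfactor : (a⁻¹ * b) ^ t * (c * b) ^ (-(t : ℤ)) = ((c * a) ^ t)⁻¹ :=
      calc (a⁻¹ * b) ^ t * (c * b) ^ (-(t : ℤ)) = (b ^ t * (b ^ t)⁻¹) * ((c * a) ^ t)⁻¹ := by
            rw [_root_.zpow_neg, zpow_natCast]
            simp only [mul_pow, mul_inv, inv_pow]
            ring
        _ = ((c * a) ^ t)⁻¹ := by rw [mul_inv_cancel₀ (pow_ne_zero t hb), one_mul]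
    rw [hfactor, inv_pow, ← pow_mul, ← pow_mul, mul_comm t 2]

theorem summable_pow_mul_add_mul {r : ℝ} (hr : 0 ≤ r) (hr1 : r < 1) (a b : ℝ) :
    Summable fun t : ℕ => r ^ t * (a + t * b) := by
  have hgeom := summable_geometric_of_lt_one hr hr1
  have harith : Summable fun t : ℕ => (t : ℝ) * r ^ t := by
    simpa using summable_pow_mul_geometric_of_norm_lt_one 1
      (by rwa [Real.norm_eq_abs, abs_of_nonneg hr])
  exact ((hgeom.mul_left a).add (harith.mul_left b)).congr fun t => by ring

section FiniteSums

variable {ι : Type*} [Fintype ι]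

theorem sum_abs_sum_mul_le_of_rowStochastic {P : Matrix ι ι ℝ}
    (hP_nonneg : ∀ i j, 0 ≤ P i j) (hP_rowsum : ∀ i, ∑ j, P i j = 1) (x : ι → ℝ) :
    ∑ a, |∑ i, x i * P i a| ≤ ∑ i, |x i| :=
  calc ∑ a, |∑ i, x i * P i a| ≤ ∑ a, ∑ i, |x i| * P i a := by
        gcongr with a
        refine (abs_sum_le_sum_abs _ _).trans_eq (sum_congr rfl fun i _ => ?_)
        rw [abs_mul, abs_of_nonneg (hP_nonneg i a)]
    _ = ∑ i, |x i| := by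
        rw [sum_comm]
        simp_rw [← mul_sum, hP_rowsum, mul_one]

theorem abs_sum_mul_le_sum_abs_mul_sum_abs (x y : ι → ℝ) :
    |∑ i, x i * y i| ≤ (∑ i, |x i|) * ∑ i, |y i| :=
  calc |∑ i, x i * y i| ≤ ∑ i, |x i| * ∑ j, |y j| := by
        refine (abs_sum_le_sum_abs _ _).trans (sum_le_sum fun i _ => ?_)
        rw [abs_mul]
        gcongr
        exact single_le_sum (fun j _ => abs_nonneg (y j)) (mem_univ i)
    _ = (∑ i, |x i|) * ∑ i, |y i| := (sum_mul _ _ _).symm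

theorem integral_sum_sum_mul {Ω : Type*} {m0 : MeasurableSpace Ω} {μ : Measure Ω}
    {G : ι → ι → Ω → ℝ} (hG : ∀ a b, Integrable (G a b) μ) (c : ι → ι → ℝ) :
    ∫ ω, ∑ a, ∑ b, c a b * G a b ω ∂μ = ∑ a, ∑ b, c a b * ∫ ω, G a b ω ∂μ := by
  rw [integral_finsetSum _ fun a _ => integrable_finsetSum _ fun b _ => (hG a b).const_mul _]
  refine sum_congr rfl fun a _ => ?_
  rw [integral_finsetSum _ fun b _ => (hG a b).const_mul _]
  simp_rw [integral_const_mul]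

end FiniteSums

section Offspring

variable {ι : Type*} [Fintype ι]

def Matrix.rowVariance (P : Matrix ι ι ℝ) (f : ι → ℝ) : ι → ℝ :=
  P *ᵥ (f ^ 2) - (P *ᵥ f) ^ 2

/- Every individual of type `i` has `m` children with i.i.d. types of law `P i ·`; these are the
first and second moments of the next generation's type counts given the current counts `z`. -/
def offspringMean (P : Matrix ι ι ℝ) (m : ℝ) (z : ι → ℝ) (j : ι) : ℝ :=
  ∑ i, z i * (m * P i j)

def offspringSecondMoment [DecidableEq ι] (P : Matrix ι ι ℝ) (m : ℝ) (z : ι → ℝ) (j k : ι) : ℝ :=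
  offspringMean P m z j * offspringMean P m z k
    + ∑ i, z i * (m * ((if j = k then P i j else 0) - P i j * P i k))

theorem sum_mul_offspringMean (P : Matrix ι ι ℝ) (m : ℝ) (z f : ι → ℝ) :
    ∑ a, f a * offspringMean P m z a = m * ∑ i, z i * (P *ᵥ f) i := by
  simp only [offspringMean, mulVec, dotProduct, mul_sum]
  rw [sum_comm]
  exact sum_congr rfl fun i _ => sum_congr rfl fun a _ => by ring

variable [DecidableEq ι]

theorem sum_sum_mul_ite_sub_mul_eq_rowVariance (P : Matrix ι ι ℝ) (f : ι → ℝ) (i : ι) :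
    ∑ a, ∑ b, f a * f b * ((if a = b then P i a else 0) - P i a * P i b)
      = P.rowVariance f i := by
  simp only [rowVariance, Pi.sub_apply, Pi.pow_apply, mulVec, dotProduct, mul_sub,
    sum_sub_distrib, mul_ite, mul_zero, sum_ite_eq, mem_univ, if_true]
  rw [sq, sum_mul_sum]
  congr 1
  · exact sum_congr rfl fun a _ => by ring
  · exact sum_congr rfl fun a _ => sum_congr rfl fun b _ => by ring

theorem sum_sum_mul_offspringSecondMoment (P : Matrix ι ι ℝ) (m : ℝ) (z f : ι → ℝ) :
    ∑ a, ∑ b, f a * f b * offspringSecondMoment P m z a b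
      = (m * ∑ i, z i * (P *ᵥ f) i) ^ 2 + m * ∑ i, z i * P.rowVariance f i := by
  have hsplit : ∀ a b, f a * f b * offspringSecondMoment P m z a b
      = (f a * offspringMean P m z a) * (f b * offspringMean P m z b)
        + ∑ i, m * z i * (f a * f b * ((if a = b then P i a else 0) - P i a * P i b)) := by
    intro a b
    rw [offspringSecondMoment, mul_add]
    congr 1
    · ring
    · rw [mul_sum]
      exact sum_congr rfl fun i _ => by ring
  have hswap : ∑ a, ∑ b, ∑ i, m * z i * (f a * f b * ((if a = b then P i a else 0) - P i a * P i b))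
      = m * ∑ i, z i * P.rowVariance f i := by
    rw [sum_congr rfl fun a _ => sum_comm, sum_comm]
    simp only [mul_sum, ← sum_sum_mul_ite_sub_mul_eq_rowVariance, mul_assoc]
  simp only [hsplit, sum_add_distrib, hswap]
  rw [← sum_mul_sum, sum_mul_offspringMean, sq]

end Offspring

section BranchingMoments

variable {Ω ι : Type*} [Fintype ι] {m0 : MeasurableSpace Ω}

def HasOffspringMean (μ : Measure Ω) (F : Filtration ℕ m0) (Z : ℕ → Ω → ι → ℝ)
    (P : Matrix ι ι ℝ) (m : ℝ) : Prop :=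
  ∀ t j, μ[(fun ω => Z (t + 1) ω j) | F t] =ᵐ[μ] fun ω => offspringMean P m (Z t ω) j

def HasOffspringSecondMoment [DecidableEq ι] (μ : Measure Ω) (F : Filtration ℕ m0)
    (Z : ℕ → Ω → ι → ℝ) (P : Matrix ι ι ℝ) (m : ℝ) : Prop :=
  ∀ t j k, μ[(fun ω => Z (t + 1) ω j * Z (t + 1) ω k) | F t] =ᵐ[μ]
    fun ω => offspringSecondMoment P m (Z t ω) j k

variable {μ : Measure Ω} [IsFiniteMeasure μ] {F : Filtration ℕ m0} {Z : ℕ → Ω → ι → ℝ}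
  {P : Matrix ι ι ℝ} {m : ℝ}

theorem HasOffspringMean.integral_succ (hmean : HasOffspringMean μ F Z P m)
    (hZ : ∀ t i, Integrable (fun ω => Z t ω i) μ) (t : ℕ) (j : ι) :
    ∫ ω, Z (t + 1) ω j ∂μ = ∑ i, (∫ ω, Z t ω i ∂μ) * (m * P i j) := by
  rw [← integral_condExp (F.le t), integral_congr_ae (hmean t j)]
  unfold offspringMean
  rw [integral_finsetSum _ fun i _ => (hZ t i).mul_const _]
  simp_rw [integral_mul_const]

theorem HasOffspringMean.sum_abs_integral_le (hmean : HasOffspringMean μ F Z P m) (hm : 0 ≤ m)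
    (hP_nonneg : ∀ i j, 0 ≤ P i j) (hP_rowsum : ∀ i, ∑ j, P i j = 1)
    (hZ : ∀ t i, Integrable (fun ω => Z t ω i) μ) (t : ℕ) :
    ∑ i, |∫ ω, Z t ω i ∂μ| ≤ m ^ t * ∑ i, |∫ ω, Z 0 ω i ∂μ| := by
  induction t with
  | zero => simp
  | succ t ih =>
    calc ∑ j, |∫ ω, Z (t + 1) ω j ∂μ| = m * ∑ j, |∑ i, (∫ ω, Z t ω i ∂μ) * P i j| := by
          simp_rw [hmean.integral_succ hZ, mul_left_comm _ m, ← mul_sum, abs_mul,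
            abs_of_nonneg hm, ← mul_sum]
      _ ≤ m * ∑ i, |∫ ω, Z t ω i ∂μ| :=
          mul_le_mul_of_nonneg_left
            (sum_abs_sum_mul_le_of_rowStochastic hP_nonneg hP_rowsum _) hm
      _ ≤ m ^ (t + 1) * ∑ i, |∫ ω, Z 0 ω i ∂μ| := by
          rw [pow_succ', mul_assoc]
          gcongr

variable [DecidableEq ι]

theorem HasOffspringSecondMoment.integral_sq_succ (hsecond : HasOffspringSecondMoment μ F Z P m)
    (hL2 : ∀ t i, MemLp (fun ω => Z t ω i) 2 μ) {lam : ℝ} {f : ι → ℝ} (hf : P *ᵥ f = lam • f)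
    (t : ℕ) :
    ∫ ω, (∑ k, Z (t + 1) ω k * f k) ^ 2 ∂μ
      = (m * lam) ^ 2 * ∫ ω, (∑ k, Z t ω k * f k) ^ 2 ∂μ
        + m * ∑ i, (∫ ω, Z t ω i ∂μ) * P.rowVariance f i := by
  have hsq : ∀ z : ι → ℝ, (∑ k, z k * f k) ^ 2 = ∑ a, ∑ b, f a * f b * (z a * z b) := by
    intro z
    rw [sq, sum_mul_sum]
    exact sum_congr rfl fun a _ => sum_congr rfl fun b _ => by ring
  have heigen : ∀ z : ι → ℝ, m * ∑ i, z i * (P *ᵥ f) i = m * lam * ∑ k, z k * f k := by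
    intro z
    simp only [hf, Pi.smul_apply, smul_eq_mul, mul_sum, mul_assoc, mul_left_comm lam]
  have hL1 : ∀ t i, Integrable (fun ω => Z t ω i) μ :=
    fun t i => (hL2 t i).integrable one_le_two
  have hmeanL2 : ∀ j, MemLp (fun ω => offspringMean P m (Z t ω) j) 2 μ :=
    fun j => memLp_finsetSum _ fun i _ => (hL2 t i).mul_const _
  have hsecondL1 : ∀ j k, Integrable (fun ω => offspringSecondMoment P m (Z t ω) j k) μ :=
    fun j k => ((hmeanL2 j).integrable_mul (hmeanL2 k)).add
      (integrable_finsetSum _ fun i _ => (hL1 t i).mul_const _)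
  calc ∫ ω, (∑ k, Z (t + 1) ω k * f k) ^ 2 ∂μ
      = ∑ a, ∑ b, f a * f b * ∫ ω, Z (t + 1) ω a * Z (t + 1) ω b ∂μ := by
        simp_rw [hsq]
        exact integral_sum_sum_mul (fun a b => (hL2 _ a).integrable_mul (hL2 _ b)) _
    _ = ∫ ω, ∑ a, ∑ b, f a * f b * offspringSecondMoment P m (Z t ω) a b ∂μ := by
        rw [integral_sum_sum_mul hsecondL1]
        refine sum_congr rfl fun a _ => sum_congr rfl fun b _ => ?_
        rw [← integral_condExp (F.le t), integral_congr_ae (hsecond t a b)]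
    _ = ∫ ω, ((m * lam) ^ 2 * (∑ k, Z t ω k * f k) ^ 2
          + m * ∑ i, Z t ω i * P.rowVariance f i) ∂μ := by
        congr 1 with ω
        rw [sum_sum_mul_offspringSecondMoment, heigen, mul_pow]
    _ = _ := by
        rw [integral_add
            (((memLp_finsetSum _ fun k _ => (hL2 t k).mul_const _).integrable_sq).const_mul _)
            ((integrable_finsetSum _ fun i _ => (hL1 t i).mul_const _).const_mul _),
          integral_const_mul, integral_const_mul,
          integral_finsetSum _ fun i _ => (hL1 t i).mul_const _]
        simp_rw [integral_mul_const]

theorem integral_sq_succ_le (hmean : HasOffspringMean μ F Z P m)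
    (hsecond : HasOffspringSecondMoment μ F Z P m) (hm : 0 ≤ m) (hP_nonneg : ∀ i j, 0 ≤ P i j)
    (hP_rowsum : ∀ i, ∑ j, P i j = 1) (hL2 : ∀ t i, MemLp (fun ω => Z t ω i) 2 μ)
    {lam : ℝ} {f : ι → ℝ} (hf : P *ᵥ f = lam • f) (t : ℕ) :
    ∫ ω, (∑ k, Z (t + 1) ω k * f k) ^ 2 ∂μ
      ≤ (m * lam) ^ 2 * ∫ ω, (∑ k, Z t ω k * f k) ^ 2 ∂μ
        + (∑ i, |∫ ω, Z 0 ω i ∂μ|) * (∑ i, |P.rowVariance f i|) * m ^ (t + 1) := by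
  rw [hsecond.integral_sq_succ hL2 hf]
  suffices hdrift : m * ∑ i, (∫ ω, Z t ω i ∂μ) * P.rowVariance f i
      ≤ (∑ i, |∫ ω, Z 0 ω i ∂μ|) * (∑ i, |P.rowVariance f i|) * m ^ (t + 1) by linarith
  calc m * ∑ i, (∫ ω, Z t ω i ∂μ) * P.rowVariance f i
      ≤ m * ((∑ i, |∫ ω, Z t ω i ∂μ|) * ∑ i, |P.rowVariance f i|) :=
        mul_le_mul_of_nonneg_left
          ((le_abs_self _).trans (abs_sum_mul_le_sum_abs_mul_sum_abs _ _)) hm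
    _ ≤ m * ((m ^ t * ∑ i, |∫ ω, Z 0 ω i ∂μ|) * ∑ i, |P.rowVariance f i|) := by
        gcongr
        exact hmean.sum_abs_integral_le hm hP_nonneg hP_rowsum
          (fun t i => (hL2 t i).integrable one_le_two) t
    _ = _ := by ring

theorem integral_sq_le (hmean : HasOffspringMean μ F Z P m)
    (hsecond : HasOffspringSecondMoment μ F Z P m) (hm : 0 ≤ m) (hP_nonneg : ∀ i j, 0 ≤ P i j)
    (hP_rowsum : ∀ i, ∑ j, P i j = 1) (hL2 : ∀ t i, MemLp (fun ω => Z t ω i) 2 μ)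
    {lam : ℝ} {f : ι → ℝ} (hf : P *ᵥ f = lam • f) (t : ℕ) :
    ∫ ω, (∑ k, Z t ω k * f k) ^ 2 ∂μ
      ≤ max ((m * lam) ^ 2) m ^ t * (∫ ω, (∑ k, Z 0 ω k * f k) ^ 2 ∂μ
        + t * ((∑ i, |∫ ω, Z 0 ω i ∂μ|) * ∑ i, |P.rowVariance f i|)) := by
  refine le_pow_mul_of_le_mul_add_pow (u := fun t => ∫ ω, (∑ k, Z t ω k * f k) ^ 2 ∂μ)
    (le_max_of_le_right hm) (fun t => ?_) t
  refine (integral_sq_succ_le hmean hsecond hm hP_nonneg hP_rowsum hL2 hf t).trans ?_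
  exact add_le_add
    (mul_le_mul_of_nonneg_right (le_max_left _ _) (integral_nonneg fun ω => sq_nonneg _))
    (mul_le_mul_of_nonneg_left (pow_le_pow_left₀ hm (le_max_right _ _) _) (by positivity))

theorem tendsto_zero_of_abs_eigenvalue_lt (hmean : HasOffspringMean μ F Z P m)
    (hsecond : HasOffspringSecondMoment μ F Z P m) (hP_nonneg : ∀ i j, 0 ≤ P i j)
    (hP_rowsum : ∀ i, ∑ j, P i j = 1) (hL2 : ∀ t i, MemLp (fun ω => Z t ω i) 2 μ)
    {lam lam₂ : ℝ} {f : ι → ℝ} (hf : P *ᵥ f = lam • f) (hgap : |lam| < lam₂)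
    (hcrit : 1 < m * lam₂ ^ 2) :
    (∀ᵐ ω ∂μ, Tendsto (fun t : ℕ => (lam₂⁻¹ * lam) ^ t *
        ((m * lam) ^ (-(t : ℤ)) * ∑ k, Z t ω k * f k)) atTop (𝓝 0)) ∧
      Tendsto (fun t : ℕ => eLpNorm (fun ω => (lam₂⁻¹ * lam) ^ t *
        ((m * lam) ^ (-(t : ℤ)) * ∑ k, Z t ω k * f k)) 2 μ) atTop (𝓝 0) := by
  have hm : 0 < m := by
    by_contra h
    nlinarith [sq_nonneg lam₂]
  set q := max ((m * lam) ^ 2) m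
  have hq_lt : q < (m * lam₂) ^ 2 := by
    refine max_lt ?_ ?_
    · rw [mul_pow, mul_pow, ← sq_abs lam]
      gcongr
    · nlinarith
  set r := q / (m * lam₂) ^ 2
  have hr : 0 ≤ r := by positivity
  have hr1 : r < 1 := (div_lt_one ((le_max_of_le_right hm.le).trans_lt hq_lt)).2 hq_lt
  set B₀ := ∫ ω, (∑ k, Z 0 ω k * f k) ^ 2 ∂μ
  set K := (∑ i, |∫ ω, Z 0 ω i ∂μ|) * ∑ i, |P.rowVariance f i|
  set X : ℕ → Ω → ℝ := fun t ω =>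
    (lam₂⁻¹ * lam) ^ t * ((m * lam) ^ (-(t : ℤ)) * ∑ k, Z t ω k * f k)
  have hX : ∀ t, MemLp (X t) 2 μ := fun t =>
    ((memLp_finsetSum _ fun k _ => (hL2 t k).mul_const _).const_mul _).const_mul _
  have hX_sq : ∀ t, ∫ ω, X t ω ^ 2 ∂μ ≤ r ^ t * (B₀ + t * K) := fun t =>
    calc ∫ ω, X t ω ^ 2 ∂μ
        = ((lam₂⁻¹ * lam) ^ t * (m * lam) ^ (-(t : ℤ))) ^ 2 * ∫ ω, (∑ k, Z t ω k * f k) ^ 2 ∂μ := by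
          rw [← integral_const_mul]
          congr 1 with ω
          ring
      _ ≤ (((m * lam₂) ^ 2) ^ t)⁻¹ * (q ^ t * (B₀ + t * K)) :=
          mul_le_mul (sq_inv_mul_pow_mul_zpow_neg_le _ _ _ t)
            (integral_sq_le hmean hsecond hm.le hP_nonneg hP_rowsum hL2 hf t)
            (integral_nonneg fun ω => sq_nonneg _) (by positivity)
      _ = r ^ t * (B₀ + t * K) := by rw [div_pow]; ring
  exact ae_tendsto_zero_and_tendsto_eLpNorm_of_summable_integral_sq hX
    ((summable_pow_mul_add_mul hr hr1 B₀ K).of_nonneg_of_le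
      (fun t => integral_nonneg fun ω => sq_nonneg _) hX_sq)

end BranchingMoments

/-- Under the m-tree Markov model with M = mP and m > λ₂⁻², for
every j ≥ 3 (here zero-based: j.val ≥ 2) the scaled martingale
(λ₂⁻¹λ_j)^t Y_{t,j}, with Y_{t,j} = (mλ_j)^{-t}⟨Z_t, f_j⟩, converges to 0
almost surely and in L². -/
theorem gw_lower_eigen_martingale_vanish
    {Ω : Type*} {m0 : MeasurableSpace Ω} (μ : Measure Ω) [IsProbabilityMeasure μ]
    (N : ℕ) (hN : 2 ≤ N) (m : ℕ)
    (P : Matrix (Fin N) (Fin N) ℝ)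
    (hP_nonneg : ∀ i j, 0 ≤ P i j) (hP_rowsum : ∀ i, ∑ j, P i j = 1)
    (lam : Fin N → ℝ) (f : Fin N → Fin N → ℝ)
    (heig : ∀ j, P.mulVec (f j) = lam j • f j)
    (hgap : ∀ j : Fin N, 2 ≤ (j : ℕ) → |lam j| < lam ⟨1, by omega⟩)
    (hcrit : (m : ℝ) * (lam ⟨1, by omega⟩) ^ 2 > 1)
    (Z : ℕ → Ω → Fin N → ℝ)
    (F : Filtration ℕ m0)
    (hL2 : ∀ t j, MemLp (fun ω => Z t ω j) 2 μ)
    (hmean : ∀ t j,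
      μ[(fun ω => Z (t + 1) ω j) | F t] =ᵐ[μ]
        fun ω => ∑ i, Z t ω i * ((m : ℝ) * P i j))
    (hsecond : ∀ t j k,
      μ[(fun ω => Z (t + 1) ω j * Z (t + 1) ω k) | F t] =ᵐ[μ]
        fun ω => (∑ i, Z t ω i * ((m : ℝ) * P i j)) * (∑ i, Z t ω i * ((m : ℝ) * P i k))
          + ∑ i, Z t ω i *
              ((m : ℝ) * ((if j = k then P i j else 0) - P i j * P i k))) :
    ∀ j : Fin N, 2 ≤ (j : ℕ) →
      (∀ᵐ ω ∂μ, Tendsto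
        (fun t : ℕ => ((lam ⟨1, by omega⟩)⁻¹ * lam j) ^ t *
          (((m : ℝ) * lam j) ^ (-(t : ℤ)) * ∑ k, Z t ω k * f j k))
        atTop (nhds 0)) ∧
      Tendsto (fun t : ℕ => eLpNorm
        (fun ω => ((lam ⟨1, by omega⟩)⁻¹ * lam j) ^ t *
          (((m : ℝ) * lam j) ^ (-(t : ℤ)) * ∑ k, Z t ω k * f j k)) 2 μ)
        atTop (nhds 0) := fun j hj =>
  tendsto_zero_of_abs_eigenvalue_lt hmean hsecond hP_nonneg hP_rowsum hL2 (heig j) (hgap j hj)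
    hcrit
end

section
/- Consider a tree-indexed Markov chain on two states with transition matrix P = [[p, 1−p],[1−q, q]], second eigenvalue λ_2 = p + q − 1, and feature values y_1, y_2. Order the nodes of the m-tree level by level and define M_n = Σ_{k=1}^n [y(X_k) − λ_2 y(X_{p(k)})] − n(1−λ_2)E_π(y), where p(k) is the parent of node k. Then M_n is a martingale with respect to F_n = σ(X_1,...,X_n), for any initial distribution of the root. -/
/-!
For a two-state transition matrix with second eigenvalue `λ₂ = p + q - 1`, every feature
satisfies `P y = λ₂ • y + (1 - λ₂) E_π(y) • 1`. Hence, given `F n`, the new edge term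
`y(X_{n+2}) - λ₂ y(X_{pa(n+2)})` has conditional mean `(1 - λ₂) E_π(y)`, which is exactly the
increment of the drift; and since every parent precedes its child, the partial sums are adapted.
-/

open MeasureTheory BigOperators Filter

section Parent

variable {m : ℕ} {pa : ℕ → ℕ}

lemma parent_lt_self (hpa : ∀ k, 2 ≤ k → pa k = (k - 2) / m + 1) {k : ℕ} (hk : 2 ≤ k) :
    pa k < k := by
  rw [hpa k hk]
  have := Nat.div_le_self (k - 2) m
  generalize (k - 2) / m = d at this ⊢
  omega

lemma one_le_parent_and_parent_le (hpa1 : pa 1 = 1)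
    (hpa : ∀ k, 2 ≤ k → pa k = (k - 2) / m + 1) {k : ℕ} (hk : 1 ≤ k) : 1 ≤ pa k ∧ pa k ≤ k := by
  obtain rfl | hk2 := hk.eq_or_lt
  · simp [hpa1]
  · exact ⟨by simp [hpa k hk2], (parent_lt_self hpa hk2).le⟩

end Parent

lemma twoState_sum_mul_eq {p q : ℝ} (hpq : p + q ≠ 2) (y : Fin 2 → ℝ) (i : Fin 2) :
    ∑ j, Matrix.of ![![p, 1 - p], ![1 - q, q]] i j * y j
      = (p + q - 1) * y i
        + (1 - (p + q - 1)) * (((1 - q) * y 0 + (1 - p) * y 1) / (2 - p - q)) := by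
  have : 2 - p - q ≠ 0 := by contrapose! hpq; linarith
  fin_cases i <;>
    simp only [Fin.sum_univ_two, Matrix.of_apply, Matrix.cons_val', Matrix.cons_val_fin_one,
      Matrix.cons_val_zero, Matrix.cons_val_one, Fin.zero_eta, Fin.mk_one] <;>
    field_simp <;> ring

section

variable {Ω : Type*} {m m0 : MeasurableSpace Ω} {μ : Measure Ω}

lemma condExp_sub_of_stronglyMeasurable [IsFiniteMeasure μ] (hm : m ≤ m0) {g h : Ω → ℝ}
    (hg : Integrable g μ) (hh : StronglyMeasurable[m] h) (hhi : Integrable h μ) :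
    μ[g - h | m] =ᵐ[μ] μ[g | m] - h := by
  simpa only [condExp_of_stronglyMeasurable hm hh hhi] using condExp_sub hg hhi m

lemma Measurable.integrable_comp_of_finite {β : Type*} [Finite β] [MeasurableSpace β]
    [MeasurableSingletonClass β] [IsFiniteMeasure μ] {Z : Ω → β} (hZ : Measurable Z)
    (f : β → ℝ) : Integrable (fun ω => f (Z ω)) μ :=
  Integrable.of_finite.comp_measurable hZ

end

section TreeIndexed

variable {Ω ι : Type*} {m0 : MeasurableSpace Ω} [MeasurableSpace ι] {X : ℕ → Ω → ι}
  {pa : ℕ → ℕ} {F : Filtration ℕ m0}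

lemma measurable_of_le_succ (hX : ∀ n, Measurable[F n] (X (n + 1))) {n k : ℕ} (hk1 : 1 ≤ k)
    (hkn : k ≤ n + 1) : Measurable[F n] (X k) := by
  obtain ⟨j, rfl⟩ : ∃ j, k = j + 1 := ⟨k - 1, by omega⟩
  exact (hX j).mono (F.mono (by omega)) le_rfl

lemma measurable_edge_of_mem_Icc (hX : ∀ n, Measurable[F n] (X (n + 1)))
    (hpa : ∀ k, 1 ≤ k → 1 ≤ pa k ∧ pa k ≤ k) {n k : ℕ} (hk : k ∈ Finset.Icc 1 (n + 1)) :
    Measurable[F n] fun ω => (X k ω, X (pa k) ω) := by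
  obtain ⟨hk1, hkn⟩ := Finset.mem_Icc.mp hk
  obtain ⟨hpa1, hpak⟩ := hpa k hk1
  exact (measurable_of_le_succ hX hk1 hkn).prodMk (measurable_of_le_succ hX hpa1 (hpak.trans hkn))

variable [Finite ι] [MeasurableSingletonClass ι]

theorem martingale_sum_Icc_parent_sub {μ : Measure Ω} [IsFiniteMeasure μ]
    (hX : ∀ n, Measurable[F n] (X (n + 1))) (hpa : ∀ k, 1 ≤ k → 1 ≤ pa k ∧ pa k ≤ k)
    (φ : ι → ι → ℝ) (b : ℕ → ℝ)
    (hdrift : ∀ n, μ[fun ω => φ (X (n + 2) ω) (X (pa (n + 2)) ω) | F n]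
      =ᵐ[μ] fun _ => b (n + 1) - b n) :
    Martingale (fun n ω => ∑ k ∈ Finset.Icc 1 (n + 1), φ (X k ω) (X (pa k) ω) - b n) F μ := by
  have hφ : Measurable (Function.uncurry φ) := measurable_of_countable _
  have hedge {n k} (hk : k ∈ Finset.Icc 1 (n + 1)) := measurable_edge_of_mem_Icc hX hpa hk
  have hint {n k} (hk : k ∈ Finset.Icc 1 (n + 1)) :
      Integrable (fun ω => φ (X k ω) (X (pa k) ω)) μ :=
    ((hedge hk).mono (F.le n) le_rfl).integrable_comp_of_finite (Function.uncurry φ)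
  have hincr n : (fun ω => ∑ k ∈ Finset.Icc 1 (n + 1 + 1), φ (X k ω) (X (pa k) ω) - b (n + 1))
      - (fun ω => ∑ k ∈ Finset.Icc 1 (n + 1), φ (X k ω) (X (pa k) ω) - b n)
      = (fun ω => φ (X (n + 2) ω) (X (pa (n + 2)) ω)) - fun _ => b (n + 1) - b n := by
    ext ω
    simp only [Pi.sub_apply, Finset.sum_Icc_succ_top (by omega : 1 ≤ n + 1 + 1)]
    ring
  refine martingale_of_condExp_sub_eq_zero_nat
    (fun n =>
      ((Finset.measurable_sum _ fun k hk => hφ.comp (hedge hk)).sub_const _).stronglyMeasurable)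
    (fun n => (integrable_finsetSum _ fun k hk => hint hk).sub (integrable_const _)) fun n => ?_
  rw [hincr]
  have hsub := condExp_sub_of_stronglyMeasurable (F.le n)
    (hint (n := n + 1) (k := n + 2) (by simp))
    (stronglyMeasurable_const (b := b (n + 1) - b n)) (integrable_const _)
  filter_upwards [hsub, hdrift n] with ω hsub hdrift
  rw [hsub, Pi.sub_apply, hdrift, sub_self, Pi.zero_apply]

end TreeIndexed

theorem two_state_tree_gls_martingale_general
    {Ω : Type*} {m0 : MeasurableSpace Ω} (μ : Measure Ω) [IsProbabilityMeasure μ]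
    (m : ℕ)
    (p q : ℝ)
    (hpq : p + q < 2)
    (y : Fin 2 → ℝ)
    (Pmat : Matrix (Fin 2) (Fin 2) ℝ)
    (hPmat : Pmat = Matrix.of ![![p, 1 - p], ![1 - q, q]])
    (X : ℕ → Ω → Fin 2)
    (pa : ℕ → ℕ) (hpa1 : pa 1 = 1)
    (hpa : ∀ k, 2 ≤ k → pa k = (k - 2) / m + 1)
    (F : Filtration ℕ m0)
    (hadapted : ∀ n : ℕ, Measurable[F n] (X (n + 1)))
    (hMarkov : ∀ (k : ℕ) (g : Fin 2 → ℝ),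
      μ[(fun ω => g (X (k + 2) ω)) | F k] =ᵐ[μ]
        fun ω => ∑ j, Pmat (X (pa (k + 2)) ω) j * g j) :
    Martingale
      (fun (n : ℕ) (ω : Ω) =>
        (∑ k ∈ Finset.Icc 1 (n + 1), (y (X k ω) - (p + q - 1) * y (X (pa k) ω)))
          - (n + 1 : ℝ) * (1 - (p + q - 1)) *
              (((1 - q) * y 0 + (1 - p) * y 1) / (2 - p - q)))
      F μ := by
  set c := ((1 - q) * y 0 + (1 - p) * y 1) / (2 - p - q)
  have hpa_le k := one_le_parent_and_parent_le (k := k) hpa1 hpa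
  refine martingale_sum_Icc_parent_sub hadapted hpa_le (fun i j => y i - (p + q - 1) * y j)
    (fun n => (n + 1 : ℝ) * (1 - (p + q - 1)) * c) fun n => ?_
  have hXpa : Measurable[F n] (X (pa (n + 2))) := measurable_of_le_succ hadapted
    (hpa_le _ (by omega)).1 (Nat.lt_succ_iff.mp (parent_lt_self hpa (by omega)))
  have hmean : μ[fun ω => y (X (n + 2) ω) | F n]
      =ᵐ[μ] fun ω => (p + q - 1) * y (X (pa (n + 2)) ω) + (1 - (p + q - 1)) * c := by
    filter_upwards [hMarkov n y] with ω h
    rw [h, hPmat, twoState_sum_mul_eq hpq.ne y]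
  have hsub : μ[fun ω => y (X (n + 2) ω) - (p + q - 1) * y (X (pa (n + 2)) ω) | F n]
      =ᵐ[μ] μ[fun ω => y (X (n + 2) ω) | F n] - fun ω => (p + q - 1) * y (X (pa (n + 2)) ω) :=
    condExp_sub_of_stronglyMeasurable (F.le n)
      ((hadapted (n + 1)).mono (F.le _) le_rfl |>.integrable_comp_of_finite y)
      (((measurable_of_countable y).comp hXpa).const_mul _).stronglyMeasurable
      ((hXpa.mono (F.le n) le_rfl).integrable_comp_of_finite y |>.const_mul _)
  filter_upwards [hsub, hmean] with ω hsub hmean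
  rw [hsub, Pi.sub_apply, hmean]
  push_cast
  ring

/-- For the tree-indexed Markov chain on two states with
transition matrix [[p,1−p],[1−q,q]], second eigenvalue λ₂ = p+q−1 and feature
y, with the nodes of the m-tree ordered level by level (node 1 the root, parent
map pa k = (k−2)/m + 1), the process
M_n = Σ_{k=1}^n [y(X_k) − λ₂ y(X_{pa(k)})] − n(1−λ₂)E_π(y)
is a martingale with respect to F_n = σ(X_1,…,X_n) (n ≥ 1), for any initial
distribution of the root. -/
theorem two_state_tree_gls_martingale
    {Ω : Type*} {m0 : MeasurableSpace Ω} (μ : Measure Ω) [IsProbabilityMeasure μ]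
    (m : ℕ) (hm : 1 ≤ m)
    (p q : ℝ) (hp0 : 0 ≤ p) (hp1 : p ≤ 1) (hq0 : 0 ≤ q) (hq1 : q ≤ 1)
    (hpq : p + q < 2)
    (y : Fin 2 → ℝ)
    (Pmat : Matrix (Fin 2) (Fin 2) ℝ)
    (hPmat : Pmat = Matrix.of ![![p, 1 - p], ![1 - q, q]])
    (X : ℕ → Ω → Fin 2)
    (pa : ℕ → ℕ) (hpa1 : pa 1 = 1)
    (hpa : ∀ k, 2 ≤ k → pa k = (k - 2) / m + 1)
    (F : Filtration ℕ m0)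
    (hadapted : ∀ n : ℕ, Measurable[F n] (X (n + 1)))
    (hMarkov : ∀ (k : ℕ) (g : Fin 2 → ℝ),
      μ[(fun ω => g (X (k + 2) ω)) | F k] =ᵐ[μ]
        fun ω => ∑ j, Pmat (X (pa (k + 2)) ω) j * g j) :
    Martingale
      (fun (n : ℕ) (ω : Ω) =>
        (∑ k ∈ Finset.Icc 1 (n + 1), (y (X k ω) - (p + q - 1) * y (X (pa k) ω)))
          - (n + 1 : ℝ) * (1 - (p + q - 1)) *
              (((1 - q) * y 0 + (1 - p) * y 1) / (2 - p - q)))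
      F μ :=
  two_state_tree_gls_martingale_general μ m p q hpq y Pmat hPmat X pa hpa1 hpa F hadapted hMarkov
end

section
/- For the two-state tree-indexed Markov chain with E_π(y) = 0 and Var_π(y) = 1, the conditional variance of each martingale increment of M_n satisfies E[(M_k − M_{k-1})² | F_{k-1}] = Var(y(X_k) | X_{p(k)}) = (1 − λ_2)(1 + λ_2 · y(X_{p(k)})²). -/
open MeasureTheory BigOperators Filter

lemma fin2_comp_integrable {Ω : Type*} {m0 : MeasurableSpace Ω} (μ : Measure Ω)
    [IsProbabilityMeasure μ] (X : Ω → Fin 2) (hX : Measurable X) (g : Fin 2 → ℝ) :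
    Integrable (fun ω => g (X ω)) μ := by
  refine (integrable_const (|g 0| + |g 1|)).mono' ?_ ?_
  · exact ((measurable_from_top.comp hX).aestronglyMeasurable).congr (by rfl)
  · filter_upwards with ω
    have : X ω = 0 ∨ X ω = 1 := by omega
    rcases this with h | h <;> rw [h] <;> simp [abs_abs]

/-- For the two-state tree-indexed Markov chain with E_π(y) = 0
and Var_π(y) = 1, the conditional variance of a martingale increment of M_n is
E[(y(X_child) − λ₂ y(X_parent))² | F] = (1 − λ₂)(1 + λ₂ y(X_parent)²). -/
theorem two_state_conditional_variance_increment
    {Ω : Type*} (G : MeasurableSpace Ω) {m0 : MeasurableSpace Ω} (μ : Measure Ω) [IsProbabilityMeasure μ]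
    (p q : ℝ) (hp0 : 0 ≤ p) (hp1 : p ≤ 1) (hq0 : 0 ≤ q) (hq1 : q ≤ 1)
    (hpq : p + q < 2)
    (y : Fin 2 → ℝ)
    (hmean : ((1 - q) * y 0 + (1 - p) * y 1) / (2 - p - q) = 0)
    (hvar : ((1 - q) * (y 0) ^ 2 + (1 - p) * (y 1) ^ 2) / (2 - p - q) = 1)
    (Pmat : Matrix (Fin 2) (Fin 2) ℝ)
    (hPmat : Pmat = Matrix.of ![![p, 1 - p], ![1 - q, q]])
    (hG : G ≤ m0)
    (Xp Xc : Ω → Fin 2)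
    (hXp : Measurable[G] Xp)
    (hXc : Measurable Xc)
    (hMarkov : ∀ g : Fin 2 → ℝ,
      μ[(fun ω => g (Xc ω)) | G] =ᵐ[μ] fun ω => ∑ j, Pmat (Xp ω) j * g j) :
    μ[(fun ω => (y (Xc ω) - (p + q - 1) * y (Xp ω)) ^ 2) | G] =ᵐ[μ]
      fun ω => (1 - (p + q - 1)) * (1 + (p + q - 1) * (y (Xp ω)) ^ 2) := by
  set l : ℝ := p + q - 1 with hl
  have hden : (2 - p - q) ≠ 0 := by intro h; linarith [hpq]
  have h1 : (1 - q) * y 0 + (1 - p) * y 1 = 0 := by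
    field_simp at hmean; linarith [hmean]
  have h2 : (1 - q) * (y 0) ^ 2 + (1 - p) * (y 1) ^ 2 = 2 - p - q := by
    field_simp at hvar; linarith [hvar]
  haveI : SigmaFinite (μ.trim hG) := inferInstance
  -- measurability and integrability facts
  have hXpm0 : Measurable[m0] Xp := hXp.mono hG le_rfl
  have hXcm0 : Measurable[m0] Xc := hXc
  have hXcI : ∀ g : Fin 2 → ℝ, Integrable (fun ω => g (Xc ω)) μ :=
    fin2_comp_integrable μ Xc hXcm0
  have hXpI : ∀ g : Fin 2 → ℝ, Integrable (fun ω => g (Xp ω)) μ :=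
    fin2_comp_integrable μ Xp hXpm0
  have hyp : Measurable[m0] fun ω => y (Xp ω) := measurable_from_top.comp hXpm0
  have hyc : Measurable[m0] fun ω => y (Xc ω) := measurable_from_top.comp hXcm0
  -- decomposition
  have hsplit : (fun ω => (y (Xc ω) - l * y (Xp ω)) ^ 2) =
      (fun ω => (fun ω => (y (Xc ω))^2) ω - (fun ω => (2 * l * y (Xp ω)) * y (Xc ω)) ω
        + (fun ω => l^2 * (y (Xp ω))^2) ω) := by
    funext ω; ring
  have hf2sm : StronglyMeasurable[G] (fun ω => 2 * l * y (Xp ω)) := by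
    exact (((measurable_from_top.comp hXp : Measurable[G] fun ω => y (Xp ω))).const_mul
      (2*l)).stronglyMeasurable
  have hprod : Integrable ((fun ω => 2 * l * y (Xp ω)) * fun ω => y (Xc ω)) μ := by
    refine (integrable_const ((2 * |l| * (|y 0| + |y 1|)) * (|y 0| + |y 1|))).mono' ?_ ?_
    · exact ((hyp.const_mul (2*l)).mul hyc).aestronglyMeasurable
    · filter_upwards with ω
      simp only [Pi.mul_apply, abs_mul]
      have h01 : Xp ω = 0 ∨ Xp ω = 1 := by omega
      have h01' : Xc ω = 0 ∨ Xc ω = 1 := by omega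
      have hpos : (0:ℝ) ≤ |y 0| + |y 1| := by positivity
      have hl0 : (0:ℝ) ≤ |l| := abs_nonneg _
      rcases h01 with h | h <;> rcases h01' with h' | h' <;> rw [h, h'] <;>
        rw [Real.norm_eq_abs, abs_mul, abs_mul, abs_mul, abs_two] <;>
        nlinarith [abs_nonneg (y 0), abs_nonneg (y 1),
          mul_nonneg hl0 (abs_nonneg (y 0)), mul_nonneg hl0 (abs_nonneg (y 1)),
          mul_nonneg (mul_nonneg hl0 (abs_nonneg (y 0))) (abs_nonneg (y 1)),
          mul_nonneg (mul_nonneg hl0 (abs_nonneg (y 0))) (abs_nonneg (y 0)),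
          mul_nonneg (mul_nonneg hl0 (abs_nonneg (y 1))) (abs_nonneg (y 1))]
  have hf3sm : StronglyMeasurable[G] (fun ω => l^2 * (y (Xp ω))^2) := by
    exact (((measurable_from_top.comp hXp : Measurable[G] fun ω => y (Xp ω))).pow_const
      2).const_mul (l^2) |>.stronglyMeasurable
  have hI1 : Integrable (fun ω => (y (Xc ω))^2) μ := hXcI (fun j => (y j)^2)
  have hI3 : Integrable (fun ω => l^2 * (y (Xp ω))^2) μ := hXpI (fun j => l^2 * (y j)^2)
  rw [hsplit]
  have step1 : μ[(fun ω => (y (Xc ω))^2) | G] =ᵐ[μ]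
      fun ω => ∑ j, Pmat (Xp ω) j * (y j)^2 := hMarkov (fun j => (y j)^2)
  have step2 : μ[((fun ω => 2 * l * y (Xp ω)) * fun ω => y (Xc ω)) | G] =ᵐ[μ]
      fun ω => (2 * l * y (Xp ω)) * ∑ j, Pmat (Xp ω) j * y j := by
    refine (condExp_mul_of_stronglyMeasurable_left hf2sm hprod (hXcI y)).trans ?_
    filter_upwards [hMarkov y] with ω hω
    simp only [Pi.mul_apply, hω]
  have step3 : μ[(fun ω => l^2 * (y (Xp ω))^2) | G] =ᵐ[μ]
      fun ω => l^2 * (y (Xp ω))^2 := by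
    rw [condExp_of_stronglyMeasurable hG hf3sm hI3]
  calc μ[(fun ω => (fun ω => (y (Xc ω))^2) ω - (fun ω => (2 * l * y (Xp ω)) * y (Xc ω)) ω
        + (fun ω => l^2 * (y (Xp ω))^2) ω) | G]
      =ᵐ[μ] μ[(fun ω => (y (Xc ω))^2) | G] - μ[((fun ω => 2 * l * y (Xp ω)) * fun ω => y (Xc ω)) | G]
        + μ[(fun ω => l^2 * (y (Xp ω))^2) | G] := by
        refine (condExp_add (hI1.sub hprod) hI3 G).trans ?_
        exact EventuallyEq.add (condExp_sub hI1 hprod G) EventuallyEq.rfl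
    _ =ᵐ[μ] fun ω => (1 - l) * (1 + l * (y (Xp ω)) ^ 2) := by
        filter_upwards [step1, step2, step3] with ω e1 e2 e3
        simp only [Pi.add_apply, Pi.sub_apply, e1, e2, e3]
        have h01 : Xp ω = 0 ∨ Xp ω = 1 := by omega
        rcases h01 with h | h <;> rw [h] <;>
          simp [hPmat, Fin.sum_univ_two, hl]
        · linear_combination h2 - 2*(p+q-1)*(y 0)*h1
        · linear_combination h2 - 2*(p+q-1)*(y 1)*h1
end

section
/- Under the m-tree Markov model with spectral gap, the sample average up to an arbitrary node n (nodes ordered level-by-level) converges in L² to E_π(y): for any initial distribution ν, μ̂_n^{(ν)} = n^{-1} Σ_{k=1}^n y(X_k^{(ν)}) → E_π(y) in L² as n → ∞, even though n need not coincide with a complete generation count n_t. -/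
/-!
The centred observable `h = y - E_π y` is `π`-orthogonal to the top eigenvector, which is
constant because `P 1 = 1` while every other eigenvalue differs from `1`; expanding `h` in the
eigenbasis gives `|(Pⁱ h) x| ≤ C rⁱ` with `r = λ₂ < 1`.

For nodes `a < b` the Markov property at `b` gives `E[u(X_a) v(X_b)] = E[u(X_a) (P v)(X_{pa b})]`.
Moving the younger node to its parent `L` times shows `|E[h(X_a) h(X_b)]| ≤ C² r^L` unless `a`
and `b` have a common ancestor fewer than `L` generations above both, and since every node has at
most `m + 1` preimages under the parent map, for fixed `a` only boundedly many `b` (in terms of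
`L`) do. Hence `E[(n⁻¹ ∑_{k ≤ n} h(X_k))²] ≤ C² r^L + c_L / n` for every `L`, whether or not `n`
ends a generation, and the limit is `0`.
-/

open MeasureTheory BigOperators Matrix Filter

open Finset
open scoped Topology

section Counting

variable {α : Type*} {p : α → α}

def CommonAncestorWithin (p : α → α) (L : ℕ) (a b : α) : Prop :=
  ∃ u < L, ∃ v < L, p^[u] a = p^[v] b

lemma CommonAncestorWithin.symm {L : ℕ} {a b : α} (h : CommonAncestorWithin p L a b) :
    CommonAncestorWithin p L b a :=
  let ⟨u, hu, v, hv, huv⟩ := h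
  ⟨v, hv, u, hu, huv.symm⟩

lemma CommonAncestorWithin.succ_of_parent_right {L : ℕ} {a b : α}
    (h : CommonAncestorWithin p L a (p b)) : CommonAncestorWithin p (L + 1) a b :=
  let ⟨u, hu, v, hv, huv⟩ := h
  ⟨u, by omega, v + 1, by omega, by rwa [Function.iterate_succ_apply]⟩

lemma commonAncestorWithin_self {L : ℕ} (hL : 0 < L) (a : α) : CommonAncestorWithin p L a a :=
  ⟨0, hL, 0, hL, rfl⟩

variable [DecidableEq α]

lemma card_filter_iterate_eq_le {s : Finset α} (hs : ∀ x ∈ s, p x ∈ s) {K : ℕ}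
    (hK : ∀ y, #{x ∈ s | p x = y} ≤ K) (v : ℕ) (y : α) :
    #{x ∈ s | p^[v] x = y} ≤ K ^ v := by
  induction v with
  | zero =>
    refine card_le_one.2 fun a ha b hb => ?_
    rw [mem_filter, Function.iterate_zero_apply] at ha hb
    rw [ha.2, hb.2]
  | succ v ih =>
    calc #{x ∈ s | p^[v + 1] x = y}
        ≤ K * #{x ∈ s | p^[v] x = y} := by
          refine card_le_mul_card_image_of_maps_to (f := p) (fun x hx => ?_) K
            fun z _ => (card_le_card fun x hx => ?_).trans (hK z)
          · rw [mem_filter, Function.iterate_succ_apply] at hx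
            exact mem_filter.2 ⟨hs x hx.1, hx.2⟩
          · rw [mem_filter, mem_filter] at hx
            exact mem_filter.2 ⟨hx.1.1, hx.2⟩
      _ ≤ K * K ^ v := Nat.mul_le_mul_left K ih
      _ = K ^ (v + 1) := (pow_succ' K v).symm

open Classical in
lemma card_filter_commonAncestorWithin_le {s : Finset α} (hs : ∀ x ∈ s, p x ∈ s) {K : ℕ}
    (hK : ∀ y, #{x ∈ s | p x = y} ≤ K) (L : ℕ) (a : α) :
    #{b ∈ s | CommonAncestorWithin p L a b} ≤ ∑ uv ∈ range L ×ˢ range L, K ^ uv.2 :=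
  calc #{b ∈ s | CommonAncestorWithin p L a b}
      ≤ #((range L ×ˢ range L).biUnion fun uv => {b ∈ s | p^[uv.2] b = p^[uv.1] a}) := by
        refine card_le_card fun b hb => ?_
        obtain ⟨hbs, u, hu, v, hv, huv⟩ := mem_filter.1 hb
        exact mem_biUnion.2 ⟨(u, v), by simp [hu, hv], mem_filter.2 ⟨hbs, huv.symm⟩⟩
    _ ≤ ∑ uv ∈ range L ×ˢ range L, K ^ uv.2 :=
        card_biUnion_le.trans (sum_le_sum fun uv _ => card_filter_iterate_eq_le hs hK _ _)

end Counting

lemma card_filter_parent_eq_le {m : ℕ} (hm : 1 ≤ m) {pa : ℕ → ℕ}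
    (hpa : ∀ k, 2 ≤ k → pa k = (k - 2) / m + 1) (n x : ℕ) :
    #{k ∈ Icc 1 n | pa k = x} ≤ m + 1 := by
  have hsub : {k ∈ Icc 1 n | pa k = x} ⊆ insert 1 {k ∈ Icc 2 n | (k - 2) / m = x - 1} := by
    intro k hk
    simp only [mem_filter, mem_Icc, mem_insert] at hk ⊢
    by_cases hk1 : k = 1
    · exact Or.inl hk1
    · refine Or.inr ⟨⟨by omega, hk.1.2⟩, ?_⟩
      rw [← hk.2, hpa k (by omega), Nat.add_sub_cancel]
  have hchildren : #{k ∈ Icc 2 n | (k - 2) / m = x - 1} ≤ m := by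
    refine (card_le_card_of_injOn (fun k => (k - 2) % m) (fun k _ => ?_)
      fun k hk l hl hkl => ?_).trans (card_range m).le
    · simpa using Nat.mod_lt _ (by omega)
    · obtain ⟨hk2, hkq⟩ := mem_filter.1 (mem_coe.1 hk)
      obtain ⟨hl2, hlq⟩ := mem_filter.1 (mem_coe.1 hl)
      have := Nat.ext_div_modEq (hkq.trans hlq.symm) hkl
      have := (mem_Icc.1 hk2).1
      have := (mem_Icc.1 hl2).1
      omega
  calc _ ≤ _ := card_le_card hsub
    _ ≤ _ := card_insert_le _ _
    _ ≤ m + 1 := by omega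

lemma Matrix.pow_mulVec_of_mulVec_eq_smul {S R : Type*} [Fintype S] [DecidableEq S]
    [CommSemiring R] {P : Matrix S S R} {v : S → R} {ρ : R} (hv : P *ᵥ v = ρ • v) (i : ℕ) :
    (P ^ i) *ᵥ v = ρ ^ i • v := by
  induction i with
  | zero => simp
  | succ i ih => rw [pow_succ, ← mulVec_mulVec, hv, mulVec_smul, ih, smul_smul, pow_succ']

section Spectral

variable {S : Type*} [Fintype S] [DecidableEq S] {π : S → ℝ} {f : S → S → ℝ}

lemma sum_sum_mul_mul_weight_eq
    (horth : ∀ a b, ∑ i, f a i * f b i * π i = if a = b then 1 else 0) (e : S → ℝ) (a : S) :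
    ∑ i, (∑ j, e j * f j i) * f a i * π i = e a := by
  simp_rw [sum_mul]
  rw [sum_comm]
  simp_rw [mul_assoc, ← mul_sum, ← mul_assoc, horth]
  simp

lemma sum_apply_mul_apply_eq_ite (hπ : ∀ i, 0 < π i)
    (horth : ∀ a b, ∑ i, f a i * f b i * π i = if a = b then 1 else 0) (i k : S) :
    ∑ j, f j i * f j k = if i = k then (π i)⁻¹ else 0 := by
  set B : Matrix S S ℝ := Matrix.of fun a i => f a i * √(π i)
  have hBBt : B * Bᵀ = 1 := by
    ext a b
    simp only [B, mul_apply, transpose_apply, of_apply, one_apply, ← horth]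
    refine sum_congr rfl fun i _ => ?_
    rw [mul_mul_mul_comm, Real.mul_self_sqrt (hπ i).le]
  have h : (Bᵀ * B) i k = (1 : Matrix S S ℝ) i k := by rw [mul_eq_one_comm.1 hBBt]
  simp only [B, mul_apply, transpose_apply, of_apply, one_apply] at h
  have hsq : ∀ j, f j i * √(π i) * (f j k * √(π k)) = f j i * f j k * (√(π i) * √(π k)) :=
    fun j => by ring
  rw [sum_congr rfl fun j _ => hsq j, ← sum_mul] at h
  split_ifs at h ⊢ with hik
  · subst hik
    rw [Real.mul_self_sqrt (hπ i).le] at h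
    exact eq_inv_of_mul_eq_one_left h
  · exact (mul_eq_zero.1 h).resolve_right
      (mul_pos (Real.sqrt_pos.2 (hπ i)) (Real.sqrt_pos.2 (hπ k))).ne'

lemma sum_coeff_mul_apply (hπ : ∀ i, 0 < π i)
    (horth : ∀ a b, ∑ i, f a i * f b i * π i = if a = b then 1 else 0) (v : S → ℝ) (i : S) :
    ∑ j, (∑ k, v k * f j k * π k) * f j i = v i := by
  calc ∑ j, (∑ k, v k * f j k * π k) * f j i = ∑ k, v k * π k * ∑ j, f j i * f j k := by
        simp_rw [sum_mul, mul_sum]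
        rw [sum_comm]
        exact sum_congr rfl fun _ _ => sum_congr rfl fun _ _ => by ring
    _ = v i := by simp [sum_apply_mul_apply_eq_ite hπ horth i, (hπ i).ne']

lemma sum_sum_mul_weight_mul_apply_eq_one (hπ : ∀ i, 0 < π i)
    (horth : ∀ a b, ∑ i, f a i * f b i * π i = if a = b then 1 else 0) (i : S) :
    ∑ j, (∑ k, f j k * π k) * f j i = 1 := by
  simpa using sum_coeff_mul_apply hπ horth 1 i

lemma sum_mul_weight_eq_zero (hπ : ∀ i, 0 < π i)
    (horth : ∀ a b, ∑ i, f a i * f b i * π i = if a = b then 1 else 0)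
    {P : Matrix S S ℝ} (hrow : ∀ i, ∑ j, P i j = 1) {lam : S → ℝ}
    (heig : ∀ j, P *ᵥ f j = lam j • f j) {a : S} (ha : lam a ≠ 1) :
    ∑ k, f a k * π k = 0 := by
  set d : S → ℝ := fun j => ∑ k, f j k * π k
  have hd : ∀ i, ∑ j, d j * f j i = 1 := sum_sum_mul_weight_mul_apply_eq_one hπ horth
  have hPd : ∀ i, ∑ j, d j * lam j * f j i = ∑ j, d j * f j i := by
    intro i
    have heig_i : ∀ j, lam j * f j i = ∑ k, P i k * f j k := fun j => by
      simpa [mulVec, dotProduct] using (congrFun (heig j) i).symm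
    simp_rw [hd, mul_assoc, heig_i, mul_sum]
    rw [sum_comm]
    simp_rw [mul_left_comm (d _), ← mul_sum, hd, mul_one, hrow]
  have hda : d a * lam a = d a := by
    rw [← sum_sum_mul_mul_weight_eq horth (fun j => d j * lam j) a,
      ← sum_sum_mul_mul_weight_eq horth d a]
    simp_rw [hPd]
  by_contra hne
  exact ha (mul_left_cancel₀ hne (hda.trans (mul_one _).symm))

lemma exists_abs_pow_mulVec_le (hπ : ∀ i, 0 < π i)
    (horth : ∀ a b, ∑ i, f a i * f b i * π i = if a = b then 1 else 0)
    {P : Matrix S S ℝ} (hrow : ∀ i, ∑ j, P i j = 1) {lam : S → ℝ}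
    (heig : ∀ j, P *ᵥ f j = lam j • f j) {j0 : S} {r : ℝ} (hr0 : 0 ≤ r) (hr1 : r < 1)
    (hgap : ∀ j ≠ j0, |lam j| ≤ r) {h : S → ℝ} (hh : ∑ k, h k * π k = 0) :
    ∃ C, ∀ i x, |(P ^ i *ᵥ h) x| ≤ C * r ^ i := by
  have hconst : ∀ k, f j0 k = f j0 j0 := by
    have hone : ∀ k, (∑ l, f j0 l * π l) * f j0 k = 1 := fun k => by
      rw [← sum_sum_mul_weight_mul_apply_eq_one hπ horth k, eq_comm]
      refine sum_eq_single j0 (fun j _ hj => ?_) fun h => absurd (mem_univ j0) h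
      have hj1 : lam j ≠ 1 := fun h1 => by
        have := hgap j hj
        rw [h1, abs_one] at this
        linarith
      rw [sum_mul_weight_eq_zero hπ horth hrow heig hj1, zero_mul]
    intro k
    have h0 := (hone k).trans (hone j0).symm
    exact mul_left_cancel₀ (left_ne_zero_of_mul_eq_one (hone k)) h0
  set c : S → ℝ := fun j => ∑ k, h k * f j k * π k
  have hc0 : c j0 = 0 := by
    simp_rw [c, hconst, mul_right_comm _ (f j0 j0), ← sum_mul, hh, zero_mul]
  have hPh : ∀ i, P ^ i *ᵥ h = ∑ j, (c j * lam j ^ i) • f j := by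
    intro i
    have hexp : h = ∑ j, c j • f j := funext fun x => by
      simp [c, Finset.sum_apply, sum_coeff_mul_apply hπ horth h x]
    rw [hexp, mulVec_sum]
    simp_rw [mulVec_smul, pow_mulVec_of_mulVec_eq_smul (heig _), smul_smul]
  refine ⟨∑ j, |c j| * ∑ y, |f j y|, fun i x => ?_⟩
  rw [hPh, Finset.sum_apply, sum_mul]
  refine (abs_sum_le_sum_abs _ _).trans (sum_le_sum fun j _ => ?_)
  simp only [Pi.smul_apply, smul_eq_mul, abs_mul, abs_pow]
  by_cases hj : j = j0
  · rw [hj, hc0, abs_zero, zero_mul, zero_mul, zero_mul]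
    positivity
  · calc |c j| * |lam j| ^ i * |f j x| ≤ |c j| * r ^ i * ∑ y, |f j y| := by
          gcongr
          · exact hgap j hj
          · exact single_le_sum (fun y _ => abs_nonneg (f j y)) (mem_univ x)
      _ = _ := by ring

end Spectral

lemma tendsto_zero_of_forall_le_add_div {u ε : ℕ → ℝ} (hu : ∀ n, 0 ≤ u n)
    (hε : Tendsto ε atTop (𝓝 0)) (c : ℕ → ℝ) (h : ∀ L n, u n ≤ ε L + c L / n) :
    Tendsto u atTop (𝓝 0) := by
  refine tendsto_order.2 ⟨fun a ha => Eventually.of_forall fun n => ha.trans_le (hu n),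
    fun a ha => ?_⟩
  obtain ⟨L, hL⟩ := (hε.eventually (gt_mem_nhds (half_pos ha))).exists
  filter_upwards [(tendsto_const_div_atTop_nhds_zero_nat (c L)).eventually
    (gt_mem_nhds (half_pos ha))] with n hn
  linarith [h L n]

lemma integral_sq_sum_eq {Ω ι : Type*} {m0 : MeasurableSpace Ω} {μ : Measure Ω} (s : Finset ι)
    {g : ι → Ω → ℝ} (hg : ∀ a ∈ s, ∀ b ∈ s, Integrable (fun ω => g a ω * g b ω) μ) :
    ∫ ω, (∑ a ∈ s, g a ω) ^ 2 ∂μ = ∑ a ∈ s, ∑ b ∈ s, ∫ ω, g a ω * g b ω ∂μ := by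
  simp_rw [sq, sum_mul_sum]
  rw [integral_finsetSum _ fun a ha => integrable_finsetSum _ fun b hb => hg a ha b hb]
  exact sum_congr rfl fun a ha => integral_finsetSum _ fun b hb => hg a ha b hb

section TreeMarkov

variable {Ω : Type*} {m0 : MeasurableSpace Ω} {μ : Measure Ω}
  {S : Type*} [MeasurableSpace S] {X : ℕ → Ω → S} {F : Filtration ℕ m0}

lemma measurable_filtration_of_le (hX : ∀ n, Measurable[F n] (X (n + 1))) {k l : ℕ}
    (hk : 1 ≤ k) (hkl : k ≤ l + 1) : Measurable[F l] (X k) := by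
  obtain ⟨j, rfl⟩ : ∃ j, k = j + 1 := ⟨k - 1, by omega⟩
  exact (hX j).mono (F.mono (by omega)) le_rfl

lemma measurable_of_adapted (hX : ∀ n, Measurable[F n] (X (n + 1))) {k : ℕ} (hk : 1 ≤ k) :
    Measurable (X k) :=
  (measurable_filtration_of_le hX hk (by omega : k ≤ k - 1 + 1)).mono (F.le _) le_rfl

variable [Fintype S] [MeasurableSingletonClass S]

lemma integrable_comp_mul_comp [IsFiniteMeasure μ] {Y Z : Ω → S} (hY : Measurable Y)
    (hZ : Measurable Z) (u v : S → ℝ) : Integrable (fun ω => u (Y ω) * v (Z ω)) μ :=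
  Integrable.of_finite.comp_measurable (f := fun ω => (Y ω, Z ω))
    (g := fun q => u q.1 * v q.2) (hY.prodMk hZ)

variable {p : ℕ → ℕ} {P : Matrix S S ℝ}

lemma integral_mul_eq_integral_mul_mulVec_parent [IsFiniteMeasure μ]
    (hX : ∀ n, Measurable[F n] (X (n + 1)))
    (hMarkov : ∀ (k : ℕ) (g : S → ℝ),
      μ[(fun ω => g (X (k + 2) ω)) | F k] =ᵐ[μ] fun ω => ∑ j, P (X (p (k + 2)) ω) j * g j)
    (u v : S → ℝ) {a b : ℕ} (ha : 1 ≤ a) (hab : a < b) :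
    ∫ ω, u (X a ω) * v (X b ω) ∂μ = ∫ ω, u (X a ω) * (P *ᵥ v) (X (p b) ω) ∂μ := by
  obtain ⟨k, rfl⟩ : ∃ k, b = k + 2 := ⟨b - 2, by omega⟩
  have hXa : Measurable[F k] fun ω => u (X a ω) :=
    (measurable_of_countable u).comp (measurable_filtration_of_le hX ha (by omega))
  have hXb := measurable_of_adapted hX (k := k + 2) (by omega)
  calc ∫ ω, u (X a ω) * v (X (k + 2) ω) ∂μ
      = ∫ ω, (μ[(fun ω => u (X a ω)) * fun ω => v (X (k + 2) ω) | F k]) ω ∂μ :=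
        (integral_condExp (F.le k)).symm
    _ = ∫ ω, u (X a ω) * (P *ᵥ v) (X (p (k + 2)) ω) ∂μ := by
        refine integral_congr_ae ?_
        filter_upwards [condExp_mul_of_stronglyMeasurable_left hXa.stronglyMeasurable
          (integrable_comp_mul_comp (measurable_of_adapted hX ha) hXb u v)
          ((integrable_comp_mul_comp hXb hXb v 1).congr (by simp)), hMarkov k v] with ω h1 h2
        rw [h1, Pi.mul_apply, h2]
        rfl

lemma abs_integral_mul_le_of_not_commonAncestorWithin [DecidableEq S] [IsProbabilityMeasure μ]
    (hp : ∀ k, 1 ≤ k → 1 ≤ p k) (hX : ∀ n, Measurable[F n] (X (n + 1)))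
    (hMarkov : ∀ (k : ℕ) (g : S → ℝ),
      μ[(fun ω => g (X (k + 2) ω)) | F k] =ᵐ[μ] fun ω => ∑ j, P (X (p (k + 2)) ω) j * g j)
    {h : S → ℝ} {C r : ℝ} (hdecay : ∀ i x, |(P ^ i *ᵥ h) x| ≤ C * r ^ i) (L : ℕ) {a b : ℕ}
    (ha : 1 ≤ a) (hb : 1 ≤ b) (hab : ¬ CommonAncestorWithin p L a b) (i j : ℕ) :
    |∫ ω, (P ^ i *ᵥ h) (X a ω) * (P ^ j *ᵥ h) (X b ω) ∂μ| ≤ C ^ 2 * r ^ (i + j + L) := by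
  induction L generalizing a b i j with
  | zero =>
    rw [← Real.norm_eq_abs]
    calc _ ≤ C * r ^ i * (C * r ^ j) * μ.real Set.univ := by
          refine norm_integral_le_of_norm_le_const (ae_of_all _ fun ω => ?_)
          rw [Real.norm_eq_abs, abs_mul]
          exact mul_le_mul (hdecay i _) (hdecay j _) (abs_nonneg _)
            ((abs_nonneg _).trans (hdecay i (X a ω)))
      _ = C ^ 2 * r ^ (i + j + 0) := by rw [probReal_univ]; ring
  | succ L ih =>
    wlog hlt : a < b generalizing a b i j
    · have hne : a ≠ b := fun h => hab (h ▸ commonAncestorWithin_self L.succ_pos a)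
      simp_rw [mul_comm ((P ^ i *ᵥ h) (X a _)), add_comm i j]
      exact this hb ha (fun h => hab h.symm) j i (by omega)
    rw [integral_mul_eq_integral_mul_mulVec_parent hX hMarkov _ _ ha hlt, mulVec_mulVec,
      ← pow_succ']
    refine (ih ha (hp b hb) (fun h => hab h.succ_of_parent_right) i (j + 1)).trans_eq ?_
    ring_nf

lemma integral_sq_sampleAverage_le [DecidableEq S] [IsProbabilityMeasure μ]
    (hp : ∀ k, 1 ≤ k → 1 ≤ p k ∧ p k ≤ k) {K : ℕ} (hK : ∀ n x, #{k ∈ Icc 1 n | p k = x} ≤ K)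
    (hX : ∀ n, Measurable[F n] (X (n + 1)))
    (hMarkov : ∀ (k : ℕ) (g : S → ℝ),
      μ[(fun ω => g (X (k + 2) ω)) | F k] =ᵐ[μ] fun ω => ∑ j, P (X (p (k + 2)) ω) j * g j)
    {h : S → ℝ} {C r : ℝ} (hr0 : 0 ≤ r) (hdecay : ∀ i x, |(P ^ i *ᵥ h) x| ≤ C * r ^ i)
    (L n : ℕ) :
    ∫ ω, ((n : ℝ)⁻¹ * ∑ k ∈ Icc 1 n, h (X k ω)) ^ 2 ∂μ
      ≤ C ^ 2 * r ^ L + C ^ 2 * (∑ uv ∈ range L ×ˢ range L, K ^ uv.2 : ℕ) / n := by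
  classical
  set M := ∑ uv ∈ range L ×ˢ range L, K ^ uv.2
  have hcov : ∀ a ∈ Icc 1 n, ∀ b ∈ Icc 1 n, ∫ ω, h (X a ω) * h (X b ω) ∂μ
      ≤ C ^ 2 * (if CommonAncestorWithin p L a b then 1 else 0) + C ^ 2 * r ^ L := by
    intro a ha b hb
    have hbound := fun L' => abs_integral_mul_le_of_not_commonAncestorWithin (μ := μ)
      (fun k hk => (hp k hk).1) hX hMarkov hdecay L' (mem_Icc.1 ha).1 (mem_Icc.1 hb).1
      (i := 0) (j := 0)
    simp only [pow_zero, one_mulVec, zero_add] at hbound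
    have hr : 0 ≤ C ^ 2 * r ^ L := by positivity
    split_ifs with hab
    · linarith [le_abs_self (∫ ω, h (X a ω) * h (X b ω) ∂μ), hbound 0 fun ⟨u, hu, _⟩ => by omega]
    · linarith [le_abs_self (∫ ω, h (X a ω) * h (X b ω) ∂μ), hbound L hab]
  have hnear : ∀ a, #{b ∈ Icc 1 n | CommonAncestorWithin p L a b} ≤ M :=
    card_filter_commonAncestorWithin_le (fun k hk => by
      simp only [mem_Icc] at hk ⊢
      have := hp k hk.1
      omega) (hK n) L
  rcases Nat.eq_zero_or_pos n with rfl | hn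
  · simpa using (by positivity : 0 ≤ C ^ 2 * r ^ L)
  have hint : ∀ a ∈ Icc 1 n, ∀ b ∈ Icc 1 n, Integrable (fun ω => h (X a ω) * h (X b ω)) μ :=
    fun a ha b hb => integrable_comp_mul_comp (measurable_of_adapted hX (mem_Icc.1 ha).1)
      (measurable_of_adapted hX (mem_Icc.1 hb).1) h h
  calc ∫ ω, ((n : ℝ)⁻¹ * ∑ k ∈ Icc 1 n, h (X k ω)) ^ 2 ∂μ
      = (n : ℝ)⁻¹ ^ 2 * ∑ a ∈ Icc 1 n, ∑ b ∈ Icc 1 n, ∫ ω, h (X a ω) * h (X b ω) ∂μ := by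
        simp_rw [mul_pow]
        rw [integral_const_mul, integral_sq_sum_eq _ hint]
    _ ≤ (n : ℝ)⁻¹ ^ 2 * ∑ a ∈ Icc 1 n, ∑ b ∈ Icc 1 n,
          (C ^ 2 * (if CommonAncestorWithin p L a b then 1 else 0) + C ^ 2 * r ^ L) := by
        gcongr with a ha b hb
        exact hcov a ha b hb
    _ = (n : ℝ)⁻¹ ^ 2 * ∑ a ∈ Icc 1 n,
          (C ^ 2 * #{b ∈ Icc 1 n | CommonAncestorWithin p L a b} + n * (C ^ 2 * r ^ L)) := by
        refine congrArg _ (sum_congr rfl fun a _ => ?_)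
        rw [sum_add_distrib, ← mul_sum, sum_boole, sum_const, Nat.card_Icc, Nat.add_sub_cancel,
          nsmul_eq_mul]
    _ ≤ (n : ℝ)⁻¹ ^ 2 * ∑ a ∈ Icc 1 n, (C ^ 2 * M + n * (C ^ 2 * r ^ L)) := by
        gcongr with a
        exact_mod_cast hnear a
    _ = C ^ 2 * r ^ L + C ^ 2 * M / n := by
        rw [sum_const, Nat.card_Icc, Nat.add_sub_cancel, nsmul_eq_mul]
        field_simp
        ring

theorem tendsto_integral_sq_sampleAverage [DecidableEq S] [IsProbabilityMeasure μ]
    (hp : ∀ k, 1 ≤ k → 1 ≤ p k ∧ p k ≤ k) {K : ℕ} (hK : ∀ n x, #{k ∈ Icc 1 n | p k = x} ≤ K)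
    (hX : ∀ n, Measurable[F n] (X (n + 1)))
    (hMarkov : ∀ (k : ℕ) (g : S → ℝ),
      μ[(fun ω => g (X (k + 2) ω)) | F k] =ᵐ[μ] fun ω => ∑ j, P (X (p (k + 2)) ω) j * g j)
    {h : S → ℝ} {C r : ℝ} (hr0 : 0 ≤ r) (hr1 : r < 1)
    (hdecay : ∀ i x, |(P ^ i *ᵥ h) x| ≤ C * r ^ i) :
    Tendsto (fun n : ℕ => ∫ ω, ((n : ℝ)⁻¹ * ∑ k ∈ Icc 1 n, h (X k ω)) ^ 2 ∂μ) atTop (𝓝 0) :=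
  tendsto_zero_of_forall_le_add_div (fun n => integral_nonneg fun ω => sq_nonneg _)
    (by simpa using (tendsto_pow_atTop_nhds_zero_of_lt_one hr0 hr1).const_mul (C ^ 2)) _
    (integral_sq_sampleAverage_le hp hK hX hMarkov hr0 hdecay)

end TreeMarkov

/-- Under the m-tree Markov model with spectral gap, the sample
average up to an arbitrary node n (nodes ordered level by level) converges in
L² to E_π(y), for any initial distribution of the seed, even though n need not
be a complete generation count. -/
theorem partial_generation_sample_average_L2
    {Ω : Type*} {m0 : MeasurableSpace Ω} (μ : Measure Ω) [IsProbabilityMeasure μ]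
    (N : ℕ) (hN : 2 ≤ N) (m : ℕ) (hm : 1 ≤ m)
    (P : Matrix (Fin N) (Fin N) ℝ)
    (hP_rowsum : ∀ i, ∑ j, P i j = 1)
    (π : Fin N → ℝ) (hπ_pos : ∀ i, 0 < π i) (hπ_sum : ∑ i, π i = 1)
    (lam : Fin N → ℝ) (f : Fin N → Fin N → ℝ)
    (heig : ∀ j, P.mulVec (f j) = lam j • f j)
    (horthonormal : ∀ a b, ∑ i, f a i * f b i * π i = if a = b then 1 else 0)
    (hlam2_pos : 0 < lam ⟨1, by omega⟩) (hlam2_lt1 : lam ⟨1, by omega⟩ < 1)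
    (hgap : ∀ j : Fin N, 2 ≤ (j : ℕ) → |lam j| < lam ⟨1, by omega⟩)
    (y : Fin N → ℝ)
    (X : ℕ → Ω → Fin N)
    (pa : ℕ → ℕ) (hpa1 : pa 1 = 1)
    (hpa : ∀ k, 2 ≤ k → pa k = (k - 2) / m + 1)
    (F : Filtration ℕ m0)
    (hadapted : ∀ n : ℕ, Measurable[F n] (X (n + 1)))
    (hMarkov : ∀ (k : ℕ) (g : Fin N → ℝ),
      μ[(fun ω => g (X (k + 2) ω)) | F k] =ᵐ[μ]
        fun ω => ∑ j, P (X (pa (k + 2)) ω) j * g j) :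
    Tendsto (fun n : ℕ =>
        ∫ ω, ((n : ℝ)⁻¹ * (∑ k ∈ Finset.Icc 1 n, y (X k ω))
          - ∑ i, π i * y i) ^ 2 ∂μ)
      atTop (nhds 0) := by
  have hgap' : ∀ j ≠ (⟨0, by omega⟩ : Fin N), |lam j| ≤ lam ⟨1, by omega⟩ := by
    intro j hj
    rcases lt_or_ge (j : ℕ) 2 with hj2 | hj2
    · have hj0 : (j : ℕ) ≠ 0 := fun h0 => hj (Fin.ext h0)
      rw [show j = ⟨1, by omega⟩ from Fin.ext (by simp only; omega), abs_of_pos hlam2_pos]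
    · exact (hgap j hj2).le
  set h : Fin N → ℝ := fun i => y i - ∑ i, π i * y i
  have hh : ∑ k, h k * π k = 0 := by
    simp only [h, sub_mul, sum_sub_distrib, ← mul_sum, hπ_sum, mul_one, mul_comm (y _), sub_self]
  obtain ⟨C, hC⟩ := exists_abs_pow_mulVec_le hπ_pos horthonormal hP_rowsum heig
    hlam2_pos.le hlam2_lt1 hgap' hh
  have hp : ∀ k, 1 ≤ k → 1 ≤ pa k ∧ pa k ≤ k := fun k hk => by
    rcases eq_or_lt_of_le hk with rfl | hk2
    · exact ⟨hpa1.ge, hpa1.le⟩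
    · rw [hpa k hk2]
      have := Nat.div_le_self (k - 2) m
      generalize (k - 2) / m = q at this ⊢
      omega
  refine (tendsto_integral_sq_sampleAverage hp (card_filter_parent_eq_le hm hpa) hadapted
    hMarkov hlam2_pos.le hlam2_lt1 hC).congr' ?_
  filter_upwards [eventually_ge_atTop 1] with n hn
  congr 1 with ω
  simp only [h, sum_sub_distrib, sum_const, Nat.card_Icc, Nat.add_sub_cancel, nsmul_eq_mul]
  field_simp
end
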